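/- arXiv:1310.5595 — 6 statements merged into one kernel-verified Lean document; each statement's English description precedes it below -/
import Mathlib

section
/- Let Z ⊕ X and Z ⊕ Y be unitarily equivalent, where X and Y are n-tuples and Z is an m-tuple (all over the same index set Λ). Then X and Y are unitarily equivalent. -/
noncomputable section

/-- A tuple of complex matrices over an index set `Λ`: a family of `n × n` complex
matrices indexed by `Λ`, where `n ≥ 1` is the *degree* of the tuple. -/
structure MatTup (Λ : Type*) where
  deg : ℕ
  deg_pos : 0 < deg
  mat : Λ → Matrix (Fin deg) (Fin deg) ℂ

namespace MatTup

variable {Λ : Type*}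

/-- The unitary action `U.X = (U Xₗ U⁻¹)ₗ`. -/
def act (X : MatTup Λ) (U : Matrix (Fin X.deg) (Fin X.deg) ℂ) : MatTup Λ :=
  ⟨X.deg, X.deg_pos, fun l => U * X.mat l * U⁻¹⟩

/-- Direct sum `X ⊕ Y`, the tuple of block-diagonal matrices. -/
def dsum (X Y : MatTup Λ) : MatTup Λ :=
  ⟨X.deg + Y.deg, Nat.add_pos_left X.deg_pos _, fun l =>
    Matrix.reindex finSumFinEquiv finSumFinEquiv (Matrix.fromBlocks (X.mat l) 0 0 (Y.mat l))⟩

/-- Unitary equivalence `X ≡ Y`: the degrees agree and some unitary `U` satisfies `U.X = Y`. -/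
def UEquiv (X Y : MatTup Λ) : Prop :=
  ∃ U ∈ Matrix.unitaryGroup (Fin X.deg) ℂ, X.act U = Y

/-- `X ≼ Y`: either `X ≡ Y`, or there are `A`, `B` with `X ≡ A` and `Y ≡ A ⊕ B`. -/
def Sub (X Y : MatTup Λ) : Prop :=
  X.UEquiv Y ∨ ∃ A B : MatTup Λ, X.UEquiv A ∧ Y.UEquiv (A.dsum B)

/-- Disjointness `X ⊥ Y`: no tuple `A` satisfies both `A ≼ X` and `A ≼ Y`. -/
def Disj (X Y : MatTup Λ) : Prop :=
  ¬∃ A : MatTup Λ, A.Sub X ∧ A.Sub Y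

/-- `X` is irreducible if no unitary `V` satisfies `V.X = A ⊕ B` for tuples `A`, `B`. -/
def Irred (X : MatTup Λ) : Prop :=
  ¬∃ (A B : MatTup Λ) (V : Matrix (Fin X.deg) (Fin X.deg) ℂ),
      V ∈ Matrix.unitaryGroup (Fin X.deg) ℂ ∧ X.act V = A.dsum B

/-- The stabilizer of `X`: all unitaries `U` with `U.X = X`. -/
def stab (X : MatTup Λ) : Set (Matrix (Fin X.deg) (Fin X.deg) ℂ) :=
  {U | U ∈ Matrix.unitaryGroup (Fin X.deg) ℂ ∧ X.act U = X}

/-- The direct sum `T 0 ⊕ T 1 ⊕ ⋯` of a nonempty finite family of tuples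
(associated to the left). -/
def bigDsum : {k : ℕ} → (Fin k → MatTup Λ) → 0 < k → MatTup Λ
  | 0, _, h => absurd h (lt_irrefl 0)
  | 1, T, _ => T 0
  | k + 2, T, _ =>
      (bigDsum (fun j : Fin (k + 1) => T j.castSucc) k.succ_pos).dsum (T (Fin.last (k + 1)))

end MatTup

open Matrix Polynomial

/-! If `V` is a unitary with `V (Z ⊕ X) = (Z ⊕ Y) V`, write `V = [[A, B], [C, D]]` in blocks.
After rotating `V` by a unimodular scalar, `1 - A` is invertible (`det (1 - ωA)` is a nonzero
polynomial in `ω` and the unit circle is infinite), and the feedback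
`W = D + C (1 - A)⁻¹ B` is the required unitary: with `P = (1 - A)⁻¹ B` one has
`V [P; 1] = [P; W]`, so `W` is an isometry because `V` is, and the block relations
`A Z = Z A`, `B X = Z B`, `C Z = Y C`, `D X = Y D` make `W` intertwine `X` and `Y`. -/

lemma Matrix.eval_charpolyRev_eq_det {R n : Type*} [CommRing R] [Fintype n] [DecidableEq n]
    (M : Matrix n n R) (t : R) : M.charpolyRev.eval t = det (1 - t • M) := by
  rw [charpolyRev, ← coe_evalRingHom, RingHom.map_det]
  congr 1
  ext i j
  simp only [RingHom.mapMatrix_apply, coe_evalRingHom, map_apply, sub_apply, one_apply,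
    smul_apply, smul_eq_mul, X_mul_C, eval_sub, apply_ite, eval_one, eval_zero, eval_mul, eval_C,
    eval_X, sub_right_inj]
  exact mul_comm _ _

lemma Complex.sphere_zero_one_infinite : (Metric.sphere (0 : ℂ) 1).Infinite :=
  (isPreconnected_sphere (by simp [Complex.rank_real_complex]) 0 1).infinite_of_nontrivial
    ⟨1, by simp, -1, by simp, by norm_num⟩

lemma Matrix.exists_norm_eq_one_isUnit_one_sub_smul {n : Type*} [Fintype n] [DecidableEq n]
    (A : Matrix n n ℂ) : ∃ ω : ℂ, ‖ω‖ = 1 ∧ IsUnit (1 - ω • A) := by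
  have hroots : {z : ℂ | A.charpolyRev.IsRoot z}.Finite :=
    finite_setOfPred_isRoot fun h => by simpa [h] using A.eval_charpolyRev
  obtain ⟨ω, hω, hroot⟩ := (Complex.sphere_zero_one_infinite.sdiff hroots).nonempty
  refine ⟨ω, by simpa using hω, ?_⟩
  rw [isUnit_iff_isUnit_det, isUnit_iff_ne_zero, ← eval_charpolyRev_eq_det]
  exact hroot

lemma Matrix.exists_unitary_intertwining_of_reindex {α m n ι : Type*} [Fintype m] [Fintype n]
    [DecidableEq m] [DecidableEq n] [CommRing α] [StarRing α] (e : m ≃ n)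
    {M N : ι → Matrix m m α} {U : Matrix n n α} (hU : U ∈ unitaryGroup n α)
    (hUMN : ∀ i, U * reindex e e (M i) = reindex e e (N i) * U) :
    ∃ V ∈ unitaryGroup m α, ∀ i, V * M i = N i * V := by
  refine ⟨(reindexAlgEquiv α α e).symm U, ?_, fun i => ?_⟩
  · rw [mem_unitaryGroup_iff', star_eq_conjTranspose, symm_reindexAlgEquiv, coe_reindexAlgEquiv,
      conjTranspose_reindex, ← star_eq_conjTranspose, ← coe_reindexAlgEquiv α α, ← map_mul,
      mem_unitaryGroup_iff'.mp hU, map_one]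
  · have h := congrArg (reindexAlgEquiv α α e).symm (hUMN i)
    rwa [← coe_reindexAlgEquiv α α, map_mul, map_mul, AlgEquiv.symm_apply_apply,
      AlgEquiv.symm_apply_apply] at h

namespace Matrix

variable {R m n : Type*} [Fintype m] [Fintype n] [Ring R]
  {A : Matrix m m R} {B : Matrix m n R} {C : Matrix n m R} {D : Matrix n n R}

lemma conjTranspose_mul_self_feedback_eq_one [DecidableEq m] [DecidableEq n] [StarRing R]
    {P : Matrix m n R} (hV : (fromBlocks A B C D)ᴴ * fromBlocks A B C D = 1)
    (hP : A * P + B = P) : (C * P + D)ᴴ * (C * P + D) = 1 := by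
  have hVP : fromBlocks A B C D * fromRows P (1 : Matrix n n R) = fromRows P (C * P + D) := by
    rw [fromBlocks_mul_fromRows, Matrix.mul_one, Matrix.mul_one, hP]
  have key := congrArg (fun M => Mᴴ * M) hVP
  simp only [conjTranspose_mul, Matrix.mul_assoc] at key
  rw [← Matrix.mul_assoc (fromBlocks A B C D)ᴴ, hV, Matrix.one_mul,
    conjTranspose_fromRows_eq_fromCols_conjTranspose,
    conjTranspose_fromRows_eq_fromCols_conjTranspose, fromCols_mul_fromRows,
    fromCols_mul_fromRows] at key
  simpa using key.symm

lemma fromBlocks_mul_fromBlocks_diagonal_eq_iff {Z : Matrix m m R} {X Y : Matrix n n R} :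
    fromBlocks A B C D * fromBlocks Z 0 0 X = fromBlocks Z 0 0 Y * fromBlocks A B C D ↔
      A * Z = Z * A ∧ B * X = Z * B ∧ C * Z = Y * C ∧ D * X = Y * D := by
  simp [fromBlocks_multiply, fromBlocks_inj]

lemma exists_feedback_intertwining [DecidableEq m] {ι : Type*} {Z : ι → Matrix m m R}
    {X : ι → Matrix n n R} (hA : IsUnit (1 - A)) (hAZ : ∀ i, A * Z i = Z i * A)
    (hBX : ∀ i, B * X i = Z i * B) :
    ∃ P : Matrix m n R, A * P + B = P ∧ ∀ i, P * X i = Z i * P := by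
  obtain ⟨u, hu⟩ := hA
  have huZ (i : ι) : Commute (↑u⁻¹ : Matrix m m R) (Z i) := by
    refine Commute.units_inv_left ?_
    rw [hu]
    exact (Commute.one_left _).sub_left (hAZ i)
  refine ⟨(↑u⁻¹ : Matrix m m R) * B, ?_, fun i => ?_⟩
  · rw [show A = 1 - ↑u by rw [hu, sub_sub_cancel], Matrix.sub_mul, Matrix.one_mul,
      ← Matrix.mul_assoc, Units.mul_inv, Matrix.one_mul, sub_add_cancel]
  · rw [Matrix.mul_assoc, hBX, ← Matrix.mul_assoc, (huZ i).eq, Matrix.mul_assoc]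

lemma feedback_mul_eq_mul {Z : Matrix m m R} {X Y : Matrix n n R} (hCZ : C * Z = Y * C)
    (hDX : D * X = Y * D) {P : Matrix m n R} (hPX : P * X = Z * P) :
    (C * P + D) * X = Y * (C * P + D) := by
  rw [Matrix.add_mul, Matrix.mul_assoc, hPX, ← Matrix.mul_assoc, hCZ, hDX, Matrix.mul_assoc,
    Matrix.mul_add]

theorem exists_unitary_intertwining_of_fromBlocks [DecidableEq m] [DecidableEq n] {ι : Type*}
    (Z : ι → Matrix m m ℂ) (X Y : ι → Matrix n n ℂ) {V : Matrix (m ⊕ n) (m ⊕ n) ℂ}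
    (hV : V ∈ unitaryGroup (m ⊕ n) ℂ)
    (hVXY : ∀ i, V * fromBlocks (Z i) 0 0 (X i) = fromBlocks (Z i) 0 0 (Y i) * V) :
    ∃ W ∈ unitaryGroup n ℂ, ∀ i, W * X i = Y i * W := by
  obtain ⟨ω, hω, hunit⟩ := exists_norm_eq_one_isUnit_one_sub_smul V.toBlocks₁₁
  have hωV : ω • V ∈ unitaryGroup (m ⊕ n) ℂ := by
    refine Unitary.smul_mem_of_mem (Unitary.mem_iff_star_mul_self.mpr ?_) hV
    rw [Complex.star_def, Complex.conj_mul', hω]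
    norm_num
  obtain ⟨A, B, C, D, hABCD⟩ : ∃ A B C D, ω • V = fromBlocks A B C D :=
    ⟨_, _, _, _, (fromBlocks_toBlocks _).symm⟩
  have hblocks (i : ι) := fromBlocks_mul_fromBlocks_diagonal_eq_iff.mp <| by
    rw [← hABCD, Matrix.smul_mul, Matrix.mul_smul, hVXY i]
  have hA : IsUnit (1 - A) := by
    rwa [show A = ω • V.toBlocks₁₁ by rw [← toBlocks_fromBlocks₁₁ A B C D, ← hABCD]; rfl]
  obtain ⟨P, hP, hPX⟩ :=
    exists_feedback_intertwining hA (fun i => (hblocks i).1) (fun i => (hblocks i).2.1)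
  refine ⟨C * P + D, ?_, fun i => feedback_mul_eq_mul (hblocks i).2.2.1 (hblocks i).2.2.2 (hPX i)⟩
  rw [mem_unitaryGroup_iff', hABCD] at hωV
  exact mem_unitaryGroup_iff'.mpr (conjTranspose_mul_self_feedback_eq_one hωV hP)

end Matrix

namespace MatTup

variable {Λ : Type*}

lemma UEquiv.deg_eq {X Y : MatTup Λ} (h : X.UEquiv Y) : X.deg = Y.deg := by
  obtain ⟨U, -, rfl⟩ := h
  rfl

lemma uEquiv_mk_iff {d : ℕ} (hd hd' : 0 < d) (M N : Λ → Matrix (Fin d) (Fin d) ℂ) :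
    UEquiv ⟨d, hd, M⟩ ⟨d, hd', N⟩ ↔ ∃ U ∈ unitaryGroup (Fin d) ℂ, ∀ l, U * M l = N l * U := by
  simp only [UEquiv, act, mk.injEq, heq_eq_eq, true_and, funext_iff]
  refine exists_congr fun U => and_congr_right fun hU => forall_congr' fun l => ?_
  have hUU : star U * U = 1 := mem_unitaryGroup_iff'.mp hU
  rw [inv_eq_left_inv hUU]
  constructor
  · intro h
    rw [← h, Matrix.mul_assoc _ (star U), hUU, Matrix.mul_one]
  · intro h
    rw [h, Matrix.mul_assoc, mem_unitaryGroup_iff.mp hU, Matrix.mul_one]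

end MatTup

theorem stmt_0_general {Λ : Type*} (X Y Z : MatTup Λ)
    (h : (Z.dsum X).UEquiv (Z.dsum Y)) : X.UEquiv Y := by
  obtain ⟨k, _, MZ⟩ := Z
  obtain ⟨d, _, MX⟩ := X
  obtain ⟨d', _, MY⟩ := Y
  obtain rfl : d = d' := Nat.add_left_cancel h.deg_eq
  obtain ⟨U, hU, hUXY⟩ := (MatTup.uEquiv_mk_iff _ _ _ _).mp h
  obtain ⟨V, hV, hVXY⟩ := exists_unitary_intertwining_of_reindex finSumFinEquiv hU hUXY
  exact (MatTup.uEquiv_mk_iff _ _ _ _).mpr <|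
    exists_unitary_intertwining_of_fromBlocks MZ MX MY hV hVXY

/-- If `Z ⊕ X` and `Z ⊕ Y` are unitarily equivalent, where `X` and `Y`
are `n`-tuples and `Z` is an `m`-tuple, then `X` and `Y` are unitarily equivalent. -/
theorem stmt_0 {Λ : Type*} [Nonempty Λ] {n m : ℕ} (X Y Z : MatTup Λ)
    (hX : X.deg = n) (hY : Y.deg = n) (hZ : Z.deg = m)
    (h : (Z.dsum X).UEquiv (Z.dsum Y)) : X.UEquiv Y :=
  stmt_0_general X Y Z h
end
end

section
/- Let X, Y, Z be tuples of complex matrices over the same index set Λ. If Z ⊥ X and Z ⊥ Y, then Z ⊥ (X ⊕ Y). -/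
noncomputable section

/-!
`A ≼ X` holds exactly when there is an isometry `V` with `V Aₗ = Xₗ V` and `V Aₗᴴ = Xₗᴴ V` for
all `l`. Consequently `Z ⊥ X` holds iff every such `*`-intertwiner `T` from `Z` to `X` vanishes: a
nonzero `T` becomes an isometric intertwiner, after rescaling, on an eigenspace of `Tᴴ T` for a
positive eigenvalue, and that eigenspace reduces `Z`, which produces a common subtuple. An
intertwiner from `Z` to `X ⊕ Y` splits into its two row blocks, which intertwine `Z` with `X`
and with `Y`, so it vanishes as soon as both of these do.
-/

open Matrix

section Intertwiner

variable {Λ 𝕜 : Type*} [RCLike 𝕜] {n m k : Type*} [Fintype n] [Fintype m] [Fintype k]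

def IsStarIntertwiner (A : Λ → Matrix n n 𝕜) (X : Λ → Matrix m m 𝕜) (T : Matrix m n 𝕜) : Prop :=
  ∀ l, T * A l = X l * T ∧ T * (A l)ᴴ = (X l)ᴴ * T

namespace IsStarIntertwiner

variable {A : Λ → Matrix n n 𝕜} {X : Λ → Matrix m m 𝕜} {Y : Λ → Matrix k k 𝕜}
  {T : Matrix m n 𝕜} {S : Matrix k m 𝕜}

theorem one [DecidableEq n] : IsStarIntertwiner A A 1 := fun _ => by simp

theorem zero : IsStarIntertwiner A X 0 := fun _ => by simp

theorem comp (hS : IsStarIntertwiner X Y S) (hT : IsStarIntertwiner A X T) :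
    IsStarIntertwiner A Y (S * T) := fun l => by
  constructor
  · rw [Matrix.mul_assoc, (hT l).1, ← Matrix.mul_assoc, (hS l).1, Matrix.mul_assoc]
  · rw [Matrix.mul_assoc, (hT l).2, ← Matrix.mul_assoc, (hS l).2, Matrix.mul_assoc]

theorem conjTranspose (hT : IsStarIntertwiner A X T) : IsStarIntertwiner X A Tᴴ := fun l => by
  constructor
  · simpa only [conjTranspose_mul, conjTranspose_conjTranspose] using
      (congrArg Matrix.conjTranspose (hT l).2).symm
  · simpa only [conjTranspose_mul] using (congrArg Matrix.conjTranspose (hT l).1).symm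

theorem smul (c : 𝕜) (hT : IsStarIntertwiner A X T) : IsStarIntertwiner A X (c • T) :=
  fun l => by simp only [Matrix.smul_mul, Matrix.mul_smul, (hT l).1, (hT l).2, and_self]

theorem reindex {n' m' : Type*} [Fintype n'] [Fintype m'] (eA : n ≃ n') (eX : m ≃ m')
    (hT : IsStarIntertwiner A X T) :
    IsStarIntertwiner (fun l => Matrix.reindex eA eA (A l))
      (fun l => Matrix.reindex eX eX (X l)) (Matrix.reindex eX eA T) := fun l => by
  simp only [Matrix.reindex_apply, conjTranspose_submatrix, submatrix_mul_equiv, (hT l).1,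
    (hT l).2, and_self]

theorem fromRows_iff {X₁ : Λ → Matrix m m 𝕜} {X₂ : Λ → Matrix k k 𝕜}
    {T₁ : Matrix m n 𝕜} {T₂ : Matrix k n 𝕜} :
    IsStarIntertwiner A (fun l => fromBlocks (X₁ l) 0 0 (X₂ l)) (fromRows T₁ T₂) ↔
      IsStarIntertwiner A X₁ T₁ ∧ IsStarIntertwiner A X₂ T₂ := by
  simp only [IsStarIntertwiner, fromRows_mul, fromBlocks_conjTranspose, conjTranspose_zero,
    fromBlocks_mul_fromRows, Matrix.zero_mul, add_zero, zero_add, fromRows_inj.eq_iff]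
  constructor
  · intro h
    exact ⟨fun l => ⟨(h l).1.1, (h l).2.1⟩, fun l => ⟨(h l).1.2, (h l).2.2⟩⟩
  · intro h l
    exact ⟨⟨(h.1 l).1, (h.2 l).1⟩, (h.1 l).2, (h.2 l).2⟩

omit [Fintype k] in
theorem conjTranspose_fromCols_mul_mul_fromCols [DecidableEq n] {V : Matrix m n 𝕜}
    {W : Matrix m k 𝕜} (hVX : IsStarIntertwiner A X V) (hV : Vᴴ * V = 1) (hVW : Vᴴ * W = 0)
    (l : Λ) : (fromCols V W)ᴴ * X l * fromCols V W = fromBlocks (A l) 0 0 (Wᴴ * X l * W) := by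
  have hXV : Vᴴ * X l = A l * Vᴴ := (hVX.conjTranspose l).1
  have hWV : Wᴴ * V = 0 := by rw [← conjTranspose_conjTranspose V, ← conjTranspose_mul, hVW,
    conjTranspose_zero]
  rw [conjTranspose_fromCols_eq_fromRows_conjTranspose, fromRows_mul, fromRows_mul_fromCols, hXV,
    Matrix.mul_assoc, hV, Matrix.mul_one, Matrix.mul_assoc, hVW, Matrix.mul_zero,
    Matrix.mul_assoc Wᴴ, ← (hVX l).1, ← Matrix.mul_assoc, hWV, Matrix.zero_mul]

end IsStarIntertwiner

end Intertwiner

section Isometry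

variable {𝕜 : Type*} [RCLike 𝕜] {n m k : Type*} [Fintype m]

theorem Matrix.conjTranspose_mul_self_eq_one_iff_orthonormal [DecidableEq n] (V : Matrix m n 𝕜) :
    Vᴴ * V = 1 ↔
      Orthonormal 𝕜 (fun j => WithLp.toLp 2 (fun i => V i j) : n → EuclideanSpace 𝕜 m) := by
  rw [← gram_eq_one_iff_orthonormal]
  congr!
  ext i j
  simp [gram_apply, mul_apply, PiLp.inner_apply, mul_comm]

theorem Matrix.exists_conjTranspose_fromCols_mul_fromCols_eq_one [Fintype n] [Fintype k]
    [DecidableEq n] [DecidableEq k]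
    (hcard : Fintype.card m = Fintype.card n + Fintype.card k) {V : Matrix m n 𝕜}
    (hV : Vᴴ * V = 1) : ∃ W : Matrix m k 𝕜, (fromCols V W)ᴴ * fromCols V W = 1 := by
  set v : n ⊕ k → EuclideanSpace 𝕜 m := Sum.elim (fun j => WithLp.toLp 2 (fun i => V i j)) 0
  have hv : Orthonormal 𝕜 ((Set.range Sum.inl).domRestrict v) := by
    rw [orthonormal_iff_ite]
    rintro ⟨_, j, rfl⟩ ⟨_, j', rfl⟩
    simpa [v, Set.domRestrict, Subtype.ext_iff] using
      orthonormal_iff_ite.mp ((conjTranspose_mul_self_eq_one_iff_orthonormal V).mp hV) j j'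
  obtain ⟨b, hb⟩ := hv.exists_orthonormalBasis_extension_of_card_eq
    (by simp [finrank_euclideanSpace, hcard])
  refine ⟨of fun i j => b (Sum.inr j) i, ?_⟩
  have hcols : fromCols V (of fun i j => b (Sum.inr j) i) =
      (EuclideanSpace.basisFun m 𝕜).toBasis.toMatrix b := by
    ext i (j | j)
    · simp [Module.Basis.toMatrix_apply, hb _ ⟨j, rfl⟩, v]
    · simp [Module.Basis.toMatrix_apply]
  rw [hcols]
  exact (EuclideanSpace.basisFun m 𝕜).toMatrix_orthonormalBasis_conjTranspose_mul_self b

theorem Matrix.conjTranspose_mul_self_mul_eq_one [Fintype k] [DecidableEq n] [DecidableEq k] {S : Matrix m k 𝕜} {T : Matrix k n 𝕜} (hS : Sᴴ * S = 1) (hT : Tᴴ * T = 1) :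
    (S * T)ᴴ * (S * T) = 1 := by
  rw [conjTranspose_mul, Matrix.mul_assoc, ← Matrix.mul_assoc Sᴴ, hS, Matrix.one_mul, hT]

theorem Matrix.conjTranspose_reindex_mul_reindex {m' n' : Type*} [Fintype m'] (e₁ : m ≃ m')
    (e₂ : n ≃ n') (V : Matrix m n 𝕜) :
    (reindex e₁ e₂ V)ᴴ * reindex e₁ e₂ V = reindex e₂ e₂ (Vᴴ * V) := by
  simp only [reindex_apply, conjTranspose_submatrix, submatrix_mul_equiv]

theorem Matrix.conjTranspose_submatrix_mul_mul_submatrix {p : Type*} (U : Matrix m n 𝕜)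
    (N : Matrix m m 𝕜) (e : p → n) :
    (U.submatrix id e)ᴴ * N * U.submatrix id e = (Uᴴ * N * U).submatrix e e := by
  rw [submatrix_mul _ _ e id e Function.bijective_id, submatrix_mul _ _ e id id
    Function.bijective_id, submatrix_id_id, conjTranspose_submatrix]

end Isometry

theorem Matrix.apply_eq_zero_of_mul_diagonal_eq {R n : Type*} [CommRing R] [NoZeroDivisors R]
    [Fintype n] [DecidableEq n] {B : Matrix n n R} {d : n → R}
    (h : B * diagonal d = diagonal d * B) {i j : n} (hij : d i ≠ d j) : B i j = 0 := by
  have hij' := congrFun₂ h i j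
  rw [mul_diagonal, diagonal_mul] at hij'
  have : (d i - d j) * B i j = 0 := by linear_combination -hij'
  exact (mul_eq_zero.mp this).resolve_left (sub_ne_zero.mpr hij)

namespace Matrix.IsHermitian

variable {𝕜 n : Type*} [RCLike 𝕜] [Fintype n] [DecidableEq n] {M : Matrix n n 𝕜}

def eigenspaceIsometry (hM : M.IsHermitian) (t : ℝ) :
    Matrix n {i // hM.eigenvalues i = t} 𝕜 :=
  (hM.eigenvectorUnitary : Matrix n n 𝕜).submatrix id Subtype.val

theorem conjTranspose_mul_mul_eigenvectorUnitary (hM : M.IsHermitian) :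
    (hM.eigenvectorUnitary : Matrix n n 𝕜)ᴴ * M * (hM.eigenvectorUnitary : Matrix n n 𝕜) =
      diagonal (RCLike.ofReal ∘ hM.eigenvalues) := by
  simpa [star_eq_conjTranspose] using hM.conjStarAlgAut_star_eigenvectorUnitary

theorem conjTranspose_eigenspaceIsometry_mul_self (hM : M.IsHermitian) (t : ℝ) :
    (hM.eigenspaceIsometry t)ᴴ * hM.eigenspaceIsometry t = 1 := by
  have h := conjTranspose_submatrix_mul_mul_submatrix (hM.eigenvectorUnitary : Matrix n n 𝕜) 1
    (Subtype.val : {i // hM.eigenvalues i = t} → n)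
  rwa [Matrix.mul_one, Matrix.mul_one, ← star_eq_conjTranspose,
    (mem_unitaryGroup_iff').mp hM.eigenvectorUnitary.2,
    submatrix_one _ Subtype.val_injective] at h

theorem conjTranspose_eigenspaceIsometry_mul_mul (hM : M.IsHermitian) (t : ℝ) :
    (hM.eigenspaceIsometry t)ᴴ * M * hM.eigenspaceIsometry t = (t : 𝕜) • 1 := by
  rw [eigenspaceIsometry, conjTranspose_submatrix_mul_mul_submatrix,
    conjTranspose_mul_mul_eigenvectorUnitary, submatrix_diagonal _ _ Subtype.val_injective]
  ext i j
  simp [diagonal_apply, one_apply, i.2]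

theorem mul_eigenspaceIsometry_of_commute (hM : M.IsHermitian) (t : ℝ) {N : Matrix n n 𝕜}
    (hN : Commute N M) :
    N * hM.eigenspaceIsometry t =
      hM.eigenspaceIsometry t * ((hM.eigenspaceIsometry t)ᴴ * N * hM.eigenspaceIsometry t) := by
  set U : Matrix n n 𝕜 := (hM.eigenvectorUnitary : Matrix n n 𝕜)
  have hUU : U * Uᴴ = 1 := by
    rw [← star_eq_conjTranspose]; exact mem_unitaryGroup_iff.mp hM.eigenvectorUnitary.2
  set D := diagonal (RCLike.ofReal ∘ hM.eigenvalues : n → 𝕜)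
  have hD : Uᴴ * M * U = D := hM.conjTranspose_mul_mul_eigenvectorUnitary
  set B := Uᴴ * N * U with hB
  have hNU : N * U = U * B := by
    rw [hB, ← Matrix.mul_assoc, ← Matrix.mul_assoc, hUU, Matrix.one_mul]
  have hBD : B * D = D * B := by
    rw [← hD, hB]
    calc Uᴴ * N * U * (Uᴴ * M * U) = Uᴴ * (N * M) * U := by
          simp only [Matrix.mul_assoc, ← Matrix.mul_assoc U Uᴴ, hUU, Matrix.one_mul]
      _ = Uᴴ * (M * N) * U := by rw [hN.eq]
      _ = Uᴴ * M * U * (Uᴴ * N * U) := by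
          simp only [Matrix.mul_assoc, ← Matrix.mul_assoc U Uᴴ, hUU, Matrix.one_mul]
  have hB0 : ∀ i j, hM.eigenvalues i ≠ hM.eigenvalues j → B i j = 0 := fun i j hij =>
    apply_eq_zero_of_mul_diagonal_eq hBD (RCLike.ofReal_injective.ne hij)
  have hNJ : N * hM.eigenspaceIsometry t = (U * B).submatrix id Subtype.val := by
    rw [← hNU, eigenspaceIsometry, submatrix_mul _ _ id id _ Function.bijective_id,
      submatrix_id_id]
  rw [hNJ, eigenspaceIsometry, conjTranspose_submatrix_mul_mul_submatrix, ← hB]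
  ext i ⟨j, hj⟩
  have hsum : ∑ x ∈ Finset.univ.filter (fun x => hM.eigenvalues x = t), U i x * B x j =
      ∑ x, U i x * B x j :=
    Finset.sum_filter_of_ne fun x _ hx => by
      by_contra hxt
      exact hx (by rw [hB0 x j (by rwa [hj]), mul_zero])
  simp only [submatrix_apply, mul_apply, id]
  rw [← hsum, Finset.sum_subtype (p := fun x => hM.eigenvalues x = t) _ (fun x => by simp)]

end Matrix.IsHermitian

open scoped ComplexOrder in
theorem IsStarIntertwiner.exists_isometries_of_ne_zero {Λ 𝕜 n m : Type*} [RCLike 𝕜] [Fintype n]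
    [Fintype m] [DecidableEq n] {A : Λ → Matrix n n 𝕜} {X : Λ → Matrix m m 𝕜}
    {T : Matrix m n 𝕜} (hT : IsStarIntertwiner A X T) (hT0 : T ≠ 0) :
    ∃ (p : ℕ) (_ : 0 < p) (A' : Λ → Matrix (Fin p) (Fin p) 𝕜) (J : Matrix n (Fin p) 𝕜)
      (K : Matrix m (Fin p) 𝕜), Jᴴ * J = 1 ∧ Kᴴ * K = 1 ∧
        IsStarIntertwiner A' A J ∧ IsStarIntertwiner A' X K := by
  -- restrict to an eigenspace of `Tᴴ * T` for a positive eigenvalue `t`; it reduces `A`, and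
  -- `T / √t` is isometric on it
  have hM : (Tᴴ * T).PosSemidef := posSemidef_conjTranspose_mul_self T
  have hMA : IsStarIntertwiner A A (Tᴴ * T) := hT.conjTranspose.comp hT
  obtain ⟨i₀, hi₀⟩ : ∃ i, hM.1.eigenvalues i ≠ 0 := by
    by_contra! h
    exact hT0 (conjTranspose_mul_self_eq_zero.mp (hM.1.eigenvalues_eq_zero_iff.mp (funext h)))
  set t := hM.1.eigenvalues i₀
  have ht : 0 < t := (hM.eigenvalues_nonneg i₀).lt_of_ne' hi₀
  set J := hM.1.eigenspaceIsometry t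
  have hJA : IsStarIntertwiner (fun l => Jᴴ * A l * J) A J := fun l => by
    refine ⟨(hM.1.mul_eigenspaceIsometry_of_commute t (hMA l).1.symm).symm, ?_⟩
    simpa only [conjTranspose_mul, conjTranspose_conjTranspose, Matrix.mul_assoc] using
      (hM.1.mul_eigenspaceIsometry_of_commute t (hMA l).2.symm).symm
  set K := ((Real.sqrt t : 𝕜)⁻¹) • (T * J)
  have hK : Kᴴ * K = 1 := by
    have hJTTJ : Jᴴ * Tᴴ * (T * J) = (t : 𝕜) • 1 := by
      rw [← hM.1.conjTranspose_eigenspaceIsometry_mul_mul t]; simp only [J, Matrix.mul_assoc]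
    simp only [K, conjTranspose_smul, conjTranspose_mul, Matrix.smul_mul, Matrix.mul_smul, hJTTJ,
      smul_smul, RCLike.star_def, map_inv₀, RCLike.conj_ofReal]
    rw [← RCLike.ofReal_inv, ← RCLike.ofReal_mul, ← RCLike.ofReal_mul, ← mul_assoc, ← mul_inv,
      Real.mul_self_sqrt ht.le, inv_mul_cancel₀ ht.ne', RCLike.ofReal_one, one_smul]
  set e := Fintype.equivFin {i // hM.1.eigenvalues i = t}
  refine ⟨_, Fintype.card_pos_iff.mpr ⟨⟨i₀, rfl⟩⟩, fun l => Matrix.reindex e e (Jᴴ * A l * J),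
    Matrix.reindex (Equiv.refl n) e J, Matrix.reindex (Equiv.refl m) e K, ?_, ?_, ?_, ?_⟩
  · rw [conjTranspose_reindex_mul_reindex, hM.1.conjTranspose_eigenspaceIsometry_mul_self,
      reindex_apply, submatrix_one_equiv]
  · rw [conjTranspose_reindex_mul_reindex, hK, reindex_apply, submatrix_one_equiv]
  · simpa only [reindex_refl_refl] using hJA.reindex e (Equiv.refl n)
  · simpa only [reindex_refl_refl] using ((hT.comp hJA).smul _).reindex e (Equiv.refl m)

namespace MatTup

variable {Λ : Type*}

theorem UEquiv.refl (X : MatTup Λ) : X.UEquiv X :=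
  ⟨1, one_mem _, by simp [act]⟩

theorem UEquiv.exists_isStarIntertwiner {X Y : MatTup Λ} (h : X.UEquiv Y) :
    ∃ U : Matrix (Fin Y.deg) (Fin X.deg) ℂ, Uᴴ * U = 1 ∧ U * Uᴴ = 1 ∧
      IsStarIntertwiner X.mat Y.mat U := by
  obtain ⟨U, hU, rfl⟩ := h
  have h₁ : Uᴴ * U = 1 := by rw [← star_eq_conjTranspose]; exact mem_unitaryGroup_iff'.mp hU
  have h₂ : U * Uᴴ = 1 := by rw [← star_eq_conjTranspose]; exact mem_unitaryGroup_iff.mp hU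
  refine ⟨U, h₁, h₂, fun l => ?_⟩
  show U * X.mat l = U * X.mat l * U⁻¹ * U ∧ U * (X.mat l)ᴴ = (U * X.mat l * U⁻¹)ᴴ * U
  simp only [inv_eq_left_inv h₁, conjTranspose_mul, conjTranspose_conjTranspose, Matrix.mul_assoc,
    h₁, Matrix.mul_one, and_self]

theorem isStarIntertwiner_dsum_iff {Z X Y : MatTup Λ} {T₁ : Matrix (Fin X.deg) (Fin Z.deg) ℂ}
    {T₂ : Matrix (Fin Y.deg) (Fin Z.deg) ℂ} :
    IsStarIntertwiner Z.mat (X.dsum Y).mat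
        (Matrix.reindex finSumFinEquiv (Equiv.refl _) (fromRows T₁ T₂)) ↔
      IsStarIntertwiner Z.mat X.mat T₁ ∧ IsStarIntertwiner Z.mat Y.mat T₂ := by
  rw [← IsStarIntertwiner.fromRows_iff]
  constructor
  · intro h
    simpa [dsum] using h.reindex (Equiv.refl _) finSumFinEquiv.symm
  · intro h
    exact h.reindex (Equiv.refl _) finSumFinEquiv

theorem exists_isometry_of_sub {A X : MatTup Λ} (h : A.Sub X) :
    ∃ V : Matrix (Fin X.deg) (Fin A.deg) ℂ, Vᴴ * V = 1 ∧ IsStarIntertwiner A.mat X.mat V := by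
  rcases h with h | ⟨A₁, B, hA, hX⟩
  · obtain ⟨U, hU, -, hUX⟩ := h.exists_isStarIntertwiner
    exact ⟨U, hU, hUX⟩
  obtain ⟨U₁, hU₁, -, hAA₁⟩ := hA.exists_isStarIntertwiner
  obtain ⟨U₂, -, hU₂, hXAB⟩ := hX.exists_isStarIntertwiner
  set ι : Matrix (Fin (A₁.dsum B).deg) (Fin A₁.deg) ℂ :=
    Matrix.reindex finSumFinEquiv (Equiv.refl _)
      (fromRows (1 : Matrix (Fin A₁.deg) (Fin A₁.deg) ℂ) (0 : Matrix (Fin B.deg) _ ℂ))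
  have hι : ιᴴ * ι = 1 := (conjTranspose_reindex_mul_reindex _ _ _).trans <| by
    rw [conjTranspose_fromRows_eq_fromCols_conjTranspose, fromCols_mul_fromRows]
    simp
  have hιB : IsStarIntertwiner A₁.mat (A₁.dsum B).mat ι :=
    isStarIntertwiner_dsum_iff.mpr ⟨.one, .zero⟩
  refine ⟨U₂ᴴ * ι * U₁, ?_, (hXAB.conjTranspose.comp hιB).comp hAA₁⟩
  refine conjTranspose_mul_self_mul_eq_one (conjTranspose_mul_self_mul_eq_one ?_ hι) hU₁
  rwa [conjTranspose_conjTranspose]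

theorem UEquiv.mk_of_isometry {a : ℕ} (ha hx : 0 < a) {A X : Λ → Matrix (Fin a) (Fin a) ℂ}
    {V : Matrix (Fin a) (Fin a) ℂ} (hV : Vᴴ * V = 1) (hVX : IsStarIntertwiner A X V) :
    UEquiv ⟨a, ha, A⟩ ⟨a, hx, X⟩ := by
  have hV' : V * Vᴴ = 1 := mul_eq_one_comm.mp hV
  refine ⟨V, by rwa [mem_unitaryGroup_iff, star_eq_conjTranspose], ?_⟩
  show (⟨a, ha, fun l => V * A l * V⁻¹⟩ : MatTup Λ) = ⟨a, hx, X⟩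
  congr 1
  funext l
  rw [inv_eq_left_inv hV, (hVX l).1, Matrix.mul_assoc, hV', Matrix.mul_one]

theorem UEquiv.mk_dsum_of_fromCols {a b : ℕ} (ha : 0 < a) (hb : 0 < b) (hx : 0 < a + b)
    {A : Λ → Matrix (Fin a) (Fin a) ℂ} {X : Λ → Matrix (Fin (a + b)) (Fin (a + b)) ℂ}
    {V : Matrix (Fin (a + b)) (Fin a) ℂ} {W : Matrix (Fin (a + b)) (Fin b) ℂ}
    (hVX : IsStarIntertwiner A X V) (hVW : (fromCols V W)ᴴ * fromCols V W = 1) :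
    UEquiv ⟨a + b, hx, X⟩ ((⟨a, ha, A⟩ : MatTup Λ).dsum ⟨b, hb, fun l => Wᴴ * X l * W⟩) := by
  set U := Matrix.reindex (Equiv.refl _) finSumFinEquiv (fromCols V W)
  have hU : U * Uᴴ = 1 := mul_eq_one_comm.mp <| by
    rw [conjTranspose_reindex_mul_reindex, hVW, reindex_apply, submatrix_one_equiv]
  rw [conjTranspose_fromCols_eq_fromRows_conjTranspose, fromRows_mul_fromCols, ← fromBlocks_one,
    fromBlocks_inj] at hVW
  refine ⟨Uᴴ, by rwa [mem_unitaryGroup_iff, star_eq_conjTranspose, conjTranspose_conjTranspose,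
    mul_eq_one_comm], ?_⟩
  show (⟨a + b, hx, fun l => Uᴴ * X l * (Uᴴ)⁻¹⟩ : MatTup Λ) = ⟨a + b, _, fun l =>
    Matrix.reindex finSumFinEquiv finSumFinEquiv (fromBlocks (A l) 0 0 (Wᴴ * X l * W))⟩
  congr 1
  funext l
  rw [inv_eq_left_inv hU, show U = (fromCols V W).submatrix id finSumFinEquiv.symm from rfl,
    conjTranspose_submatrix_mul_mul_submatrix,
    hVX.conjTranspose_fromCols_mul_mul_fromCols hVW.1 hVW.2.1, reindex_apply]

theorem sub_of_isometry {A X : MatTup Λ} {V : Matrix (Fin X.deg) (Fin A.deg) ℂ}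
    (hV : Vᴴ * V = 1) (hVX : IsStarIntertwiner A.mat X.mat V) : A.Sub X := by
  obtain ⟨a, ha, A⟩ := A
  obtain ⟨x, hx, X⟩ := X
  dsimp only at V hV hVX
  have hax : a ≤ x := by
    simpa using ((conjTranspose_mul_self_eq_one_iff_orthonormal V).mp hV).linearIndependent
      |>.fintype_card_le_finrank
  obtain ⟨b, rfl⟩ := Nat.exists_eq_add_of_le hax
  rcases Nat.eq_zero_or_pos b with rfl | hb
  · exact .inl (.mk_of_isometry ha hx hV hVX)
  obtain ⟨W, hW⟩ := exists_conjTranspose_fromCols_mul_fromCols_eq_one (k := Fin b) (by simp) hV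
  exact .inr ⟨_, _, .refl _, .mk_dsum_of_fromCols ha hb hx hVX hW⟩

theorem disj_iff_forall_isStarIntertwiner_eq_zero {Z X : MatTup Λ} :
    Z.Disj X ↔ ∀ T : Matrix (Fin X.deg) (Fin Z.deg) ℂ, IsStarIntertwiner Z.mat X.mat T → T = 0 := by
  constructor
  · intro hZX T hT
    by_contra hT0
    obtain ⟨p, hp, A, J, K, hJ, hK, hJZ, hKX⟩ := hT.exists_isometries_of_ne_zero hT0
    exact hZX ⟨⟨p, hp, A⟩, sub_of_isometry hJ hJZ, sub_of_isometry hK hKX⟩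
  · rintro h ⟨A, hAZ, hAX⟩
    obtain ⟨V, hV, hVZ⟩ := exists_isometry_of_sub hAZ
    obtain ⟨W, hW, hWX⟩ := exists_isometry_of_sub hAX
    -- `W * Vᴴ` intertwines `Z` with `X` and restricts to the isometry `W` on the range of `V`
    have hW0 : W = 0 := by
      rw [← Matrix.mul_one W, ← hV, ← Matrix.mul_assoc, h _ (hWX.comp hVZ.conjTranspose),
        Matrix.zero_mul]
    have : NeZero A.deg := ⟨A.deg_pos.ne'⟩
    exact one_ne_zero (hW.symm.trans (by rw [hW0, Matrix.mul_zero]))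

end MatTup

theorem stmt_1_general {Λ : Type*} (X Y Z : MatTup Λ)
    (hZX : Z.Disj X) (hZY : Z.Disj Y) : Z.Disj (X.dsum Y) := by
  rw [MatTup.disj_iff_forall_isStarIntertwiner_eq_zero] at *
  intro T hT
  obtain ⟨T, rfl⟩ := (Matrix.reindex finSumFinEquiv (Equiv.refl (Fin Z.deg))).surjective T
  rw [← fromRows_toRows T] at hT ⊢
  obtain ⟨hT₁, hT₂⟩ := MatTup.isStarIntertwiner_dsum_iff.mp hT
  rw [hZX _ hT₁, hZY _ hT₂, fromRows_zero]
  rfl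

/-- If `Z ⊥ X` and `Z ⊥ Y`, then `Z ⊥ (X ⊕ Y)`. -/
theorem stmt_1 {Λ : Type*} [Nonempty Λ] (X Y Z : MatTup Λ)
    (hZX : Z.Disj X) (hZY : Z.Disj Y) : Z.Disj (X.dsum Y) :=
  stmt_1_general X Y Z hZX hZY
end
end

section
/- Let X and Y be tuples of complex matrices over the same index set Λ with X ⊥ Y. Then stab(X ⊕ Y) = {U ⊕ V : U ∈ stab(X), V ∈ stab(Y)}, where U ⊕ V denotes the block-diagonal unitary matrix with blocks U and V. -/
noncomputable section

/-- The block-diagonal sum of two square matrices. -/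
def matDsum {n m : ℕ} (U : Matrix (Fin n) (Fin n) ℂ) (V : Matrix (Fin m) (Fin m) ℂ) :
    Matrix (Fin (n + m)) (Fin (n + m)) ℂ :=
  Matrix.reindex finSumFinEquiv finSumFinEquiv (Matrix.fromBlocks U 0 0 V)

/-!
Write a unitary `W` stabilising `X ⊕ Y` in block form `[[A, B], [C, D]]`. Both `W` and `W⋆`
commute with `X ⊕ Y`, so `X B = B Y` and `Y B⋆ = B⋆ X`. Then `B⋆B` commutes with `Y` and `BB⋆`
with `X`, and `B (B⋆B) = (BB⋆) B`. After diagonalising `B⋆B` and `BB⋆`, pick a nonzero eigenvalue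
`c`: the `c`-eigenspaces of `B⋆B` and `BB⋆` reduce `Y` and `X`, and `c^{-1/2} B` maps the first
unitarily onto the second, intertwining the compressions of `Y` and `X`. This common subtuple
contradicts `X ⊥ Y`, so `B = 0`; symmetrically `C = 0`, and `W = A ⊕ D`.
-/

open Matrix

namespace Matrix

variable {l m n p q R : Type*}

theorem apply_eq_zero_of_mul_diagonal_eq_s2 [Fintype m] [Fintype n] [DecidableEq m] [DecidableEq n]
    [CommRing R] [NoZeroDivisors R] {M : Matrix m n R} {d : m → R} {d' : n → R}
    (h : M * diagonal d' = diagonal d * M) {i : m} {j : n} (hij : d i ≠ d' j) : M i j = 0 := by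
  have hij' := congrFun (congrFun h i) j
  rw [mul_diagonal, diagonal_mul] at hij'
  have : M i j * (d' j - d i) = 0 := by rw [mul_sub, hij', mul_comm, sub_self]
  exact (mul_eq_zero.mp this).resolve_right (sub_ne_zero.mpr hij.symm)

theorem submatrix_mul_of_apply_eq_zero [Fintype n] [LinearOrder n] [NonUnitalNonAssocSemiring R]
    {M : Matrix m n R} {N : Matrix n p R} (s : Finset n) (f : l → m) (g : q → p)
    (h : ∀ a b, ∀ j ∉ s, M (f a) j * N j (g b) = 0) :
    (M * N).submatrix f g =
      M.submatrix f (s.orderEmbOfFin rfl) * N.submatrix (s.orderEmbOfFin rfl) g := by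
  ext a b
  simp only [submatrix_apply, mul_apply]
  rw [← Finset.sum_subset (Finset.subset_univ s) fun j _ hj => h a b j hj]
  conv_lhs => rw [← s.map_orderEmbOfFin_univ rfl, Finset.sum_map]
  rfl

theorem commute_mul_conjTranspose_self [Fintype m] [Fintype n] [NonUnitalSemiring R] [Star R]
    {X : Matrix m m R} {Y : Matrix n n R} {B : Matrix m n R} (hXB : X * B = B * Y)
    (hYB : Y * Bᴴ = Bᴴ * X) : Commute X (B * Bᴴ) := by
  rw [Commute, SemiconjBy, ← Matrix.mul_assoc, hXB, Matrix.mul_assoc, hYB, ← Matrix.mul_assoc]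

theorem apply_eq_zero_of_mul_conjTranspose_eq_diagonal [Fintype m] [Fintype n] [DecidableEq m]
    [DecidableEq n] [CommRing R] [NoZeroDivisors R] [StarRing R] {B : Matrix m n R} {d : m → R}
    {d' : n → R} (hd : B * Bᴴ = diagonal d) (hd' : Bᴴ * B = diagonal d') {i : m} {j : n}
    (hij : d i ≠ d' j) : B i j = 0 :=
  apply_eq_zero_of_mul_diagonal_eq_s2 (by rw [← hd, ← hd', Matrix.mul_assoc]) hij

theorem conj_mul_conj_eq [Fintype m] [Fintype n] [DecidableEq m] [DecidableEq n] [Semiring R]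
    {X : Matrix m m R} {Y : Matrix n n R} {B : Matrix m n R} {Q Q' : Matrix m m R}
    {P P' : Matrix n n R} (hQ : Q * Q' = 1) (hP : P * P' = 1) (h : X * B = B * Y) :
    Q' * X * Q * (Q' * B * P) = Q' * B * P * (P' * Y * P) := by
  simp only [Matrix.mul_assoc]
  rw [← Matrix.mul_assoc Q, hQ, Matrix.one_mul, ← Matrix.mul_assoc P, hP, Matrix.one_mul,
    ← Matrix.mul_assoc X, h, Matrix.mul_assoc]

theorem exists_unitary_conj_diagonal [Fintype m] [Fintype n] [DecidableEq m] [DecidableEq n]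
    (B : Matrix m n ℂ) :
    ∃ Q ∈ unitaryGroup m ℂ, ∃ P ∈ unitaryGroup n ℂ, ∃ (dX : m → ℝ) (dY : n → ℝ),
      star Q * B * P * (star Q * B * P)ᴴ = diagonal (fun i => (dX i : ℂ)) ∧
      (star Q * B * P)ᴴ * (star Q * B * P) = diagonal (fun j => (dY j : ℂ)) := by
  have hBB := isHermitian_conjTranspose_mul_self B
  have hBB' := isHermitian_mul_conjTranspose_self B
  have hdiag := hBB.conjStarAlgAut_star_eigenvectorUnitary
  have hdiag' := hBB'.conjStarAlgAut_star_eigenvectorUnitary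
  rw [Unitary.conjStarAlgAut_star_apply] at hdiag hdiag'
  refine ⟨_, hBB'.eigenvectorUnitary.2, _, hBB.eigenvectorUnitary.2, _, _,
    .trans ?_ hdiag', .trans ?_ hdiag⟩
  · simp only [conjTranspose_mul, ← star_eq_conjTranspose, star_star, Matrix.mul_assoc]
    rw [← Matrix.mul_assoc (hBB.eigenvectorUnitary : Matrix n n ℂ),
      Unitary.mul_star_self_of_mem hBB.eigenvectorUnitary.2, Matrix.one_mul]
  · simp only [conjTranspose_mul, ← star_eq_conjTranspose, star_star, Matrix.mul_assoc]
    rw [← Matrix.mul_assoc (hBB'.eigenvectorUnitary : Matrix m m ℂ),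
      Unitary.mul_star_self_of_mem hBB'.eigenvectorUnitary.2, Matrix.one_mul]

theorem commute_fromBlocks_iff [Fintype m] [Fintype n] [NonUnitalNonAssocSemiring R]
    {A : Matrix m m R} {B : Matrix m n R} {C : Matrix n m R} {D : Matrix n n R}
    {X : Matrix m m R} {Y : Matrix n n R} :
    Commute (fromBlocks A B C D) (fromBlocks X 0 0 Y) ↔
      Commute A X ∧ B * Y = X * B ∧ C * X = Y * C ∧ Commute D Y := by
  simp only [Commute, SemiconjBy, fromBlocks_multiply, Matrix.mul_zero, Matrix.zero_mul, add_zero,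
    zero_add, fromBlocks_inj]

theorem fromBlocks_zero_mem_unitaryGroup_iff [Fintype m] [Fintype n] [DecidableEq m]
    [DecidableEq n] [CommRing R] [StarRing R] {A : Matrix m m R} {D : Matrix n n R} :
    fromBlocks A 0 0 D ∈ unitaryGroup (m ⊕ n) R ↔ A ∈ unitaryGroup m R ∧ D ∈ unitaryGroup n R := by
  simp only [mem_unitaryGroup_iff, star_eq_conjTranspose, fromBlocks_conjTranspose,
    conjTranspose_zero, fromBlocks_multiply, Matrix.mul_zero, Matrix.zero_mul, add_zero, zero_add,
    ← fromBlocks_one, fromBlocks_inj, true_and]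

theorem reindex_mem_unitaryGroup_iff [Fintype m] [Fintype n] [DecidableEq m] [DecidableEq n]
    [CommRing R] [StarRing R] (e : m ≃ n) {M : Matrix m m R} :
    reindex e e M ∈ unitaryGroup n R ↔ M ∈ unitaryGroup m R := by
  rw [mem_unitaryGroup_iff, mem_unitaryGroup_iff, star_eq_conjTranspose, star_eq_conjTranspose,
    conjTranspose_reindex, ← coe_reindexRingEquiv, ← map_mul, ← map_one (reindexRingEquiv R e),
    (reindexRingEquiv R e).injective.eq_iff]

end Matrix

theorem commute_star_of_mem_unitary {R : Type*} [Monoid R] [StarMul R] {U x : R}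
    (hU : U ∈ unitary R) (h : Commute U x) : Commute (star U) x := by
  rw [commute_unitary_iff_star_right_conjugate (Unitary.star_mem hU), star_star]
  exact (commute_unitary_iff_star_left_conjugate hU).mp h

namespace MatTup

variable {Λ : Type*}

theorem mem_stab_iff {X : MatTup Λ} {U : Matrix (Fin X.deg) (Fin X.deg) ℂ} :
    U ∈ X.stab ↔ U ∈ unitaryGroup (Fin X.deg) ℂ ∧ ∀ l, Commute U (X.mat l) := by
  refine and_congr_right fun hU => ?_
  obtain ⟨n, hn, M⟩ := X
  simp only [act, mk.injEq, heq_eq_eq, true_and, funext_iff,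
    inv_eq_right_inv (mem_unitaryGroup_iff.mp hU)]
  exact forall_congr' fun l => (commute_unitary_iff_star_right_conjugate hU).symm

theorem uequiv_iff {X Y : MatTup Λ} : X.UEquiv Y ↔ ∃ V : Matrix (Fin Y.deg) (Fin X.deg) ℂ,
    Vᴴ * V = 1 ∧ V * Vᴴ = 1 ∧ ∀ l, V * X.mat l = Y.mat l * V := by
  constructor
  · rintro ⟨U, hU, rfl⟩
    refine ⟨U, mem_unitaryGroup_iff'.mp hU, mem_unitaryGroup_iff.mp hU, fun l => ?_⟩
    change U * X.mat l = U * X.mat l * U⁻¹ * U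
    rw [inv_eq_right_inv (mem_unitaryGroup_iff.mp hU), Matrix.mul_assoc,
      mem_unitaryGroup_iff'.mp hU, Matrix.mul_one]
  · rintro ⟨V, hVV, hVV', hV⟩
    obtain ⟨m, hm, N⟩ := Y
    have hdeg : X.deg = m := by
      have htr := congrArg trace hVV
      rw [trace_mul_comm, hVV'] at htr
      simpa using htr.symm
    subst hdeg
    refine ⟨V, mem_unitaryGroup_iff.mpr hVV', ?_⟩
    simp only [act, mk.injEq, heq_eq_eq, true_and]
    funext l
    rw [hV, inv_eq_right_inv hVV', Matrix.mul_assoc, hVV', Matrix.mul_one]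

theorem UEquiv.symm {X Y : MatTup Λ} (h : X.UEquiv Y) : Y.UEquiv X := by
  obtain ⟨V, hVV, hVV', hV⟩ := uequiv_iff.mp h
  refine uequiv_iff.mpr ⟨Vᴴ, by simpa using hVV', by simpa using hVV, fun l => ?_⟩
  calc Vᴴ * Y.mat l = Vᴴ * (Y.mat l * V) * Vᴴ := by
        rw [Matrix.mul_assoc, Matrix.mul_assoc, hVV', Matrix.mul_one]
    _ = X.mat l * Vᴴ := by rw [← hV, ← Matrix.mul_assoc, hVV, Matrix.one_mul]

theorem UEquiv.trans {X Y Z : MatTup Λ} (hXY : X.UEquiv Y) (hYZ : Y.UEquiv Z) : X.UEquiv Z := by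
  obtain ⟨V, hVV, hVV', hV⟩ := uequiv_iff.mp hXY
  obtain ⟨W, hWW, hWW', hW⟩ := uequiv_iff.mp hYZ
  refine uequiv_iff.mpr ⟨W * V, ?_, ?_, fun l => ?_⟩
  · rw [conjTranspose_mul, Matrix.mul_assoc, ← Matrix.mul_assoc Wᴴ, hWW, Matrix.one_mul, hVV]
  · rw [conjTranspose_mul, Matrix.mul_assoc, ← Matrix.mul_assoc V, hVV', Matrix.one_mul, hWW']
  · rw [Matrix.mul_assoc, hV, ← Matrix.mul_assoc, hW, Matrix.mul_assoc]

theorem uequiv_of_submatrix {X Y : MatTup Λ} (e : Fin Y.deg ≃ Fin X.deg)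
    (h : ∀ l, Y.mat l = (X.mat l).submatrix e e) : X.UEquiv Y := by
  refine uequiv_iff.mpr ⟨(1 : Matrix (Fin X.deg) (Fin X.deg) ℂ).submatrix e (Equiv.refl _),
    ?_, ?_, fun l => ?_⟩
  · rw [conjTranspose_submatrix, conjTranspose_one, submatrix_mul_equiv, Matrix.one_mul,
      submatrix_one_equiv]
  · rw [conjTranspose_submatrix, conjTranspose_one, submatrix_mul_equiv, Matrix.one_mul,
      submatrix_one_equiv]
  · ext i j
    simp only [h l, Matrix.mul_apply, submatrix_apply, Matrix.one_apply, Equiv.coe_refl, id,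
      boole_mul, mul_boole]
    rw [Equiv.sum_comp e (fun k => if k = j then X.mat l (e i) k else 0)]
    simp

theorem Sub.of_uequiv_left {A A' Z : MatTup Λ} (hA : A.UEquiv A') (h : A'.Sub Z) : A.Sub Z := by
  rcases h with h | ⟨B, C, hB, hZ⟩
  · exact .inl (hA.trans h)
  · exact .inr ⟨B, C, hA.trans hB, hZ⟩

theorem Sub.of_uequiv_right {A Z Z' : MatTup Λ} (hZ : Z.UEquiv Z') (h : A.Sub Z') : A.Sub Z := by
  rcases h with h | ⟨B, C, hB, hZ'⟩
  · exact .inl (h.trans hZ.symm)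
  · exact .inr ⟨B, C, hB, hZ.trans hZ'⟩

theorem Disj.symm {X Y : MatTup Λ} (h : X.Disj Y) : Y.Disj X :=
  fun ⟨A, hY, hX⟩ => h ⟨A, hX, hY⟩

def restrict (Z : MatTup Λ) (S : Finset (Fin Z.deg)) (hS : S.Nonempty) : MatTup Λ :=
  ⟨S.card, hS.card_pos, fun l => (Z.mat l).submatrix (S.orderEmbOfFin rfl) (S.orderEmbOfFin rfl)⟩

theorem restrict_sub (Z : MatTup Λ) {S : Finset (Fin Z.deg)} (hS : S.Nonempty)
    (hZ : ∀ l i j, i ∈ S → j ∉ S → Z.mat l i j = 0 ∧ Z.mat l j i = 0) :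
    (Z.restrict S hS).Sub Z := by
  rcases Sᶜ.eq_empty_or_nonempty with hSc | hSc
  · have hbij : Function.Bijective (S.orderEmbOfFin rfl) :=
      (Fintype.bijective_iff_injective_and_card _).mpr
        ⟨(S.orderEmbOfFin rfl).injective, by simp [(Finset.compl_eq_empty_iff S).mp hSc]⟩
    exact .inl
      (uequiv_of_submatrix (Y := Z.restrict S hS) (Equiv.ofBijective _ hbij) fun l => rfl).symm
  · refine .inr ⟨_, Z.restrict Sᶜ hSc, .refl _,
      uequiv_of_submatrix (finSumFinEquiv.symm.trans (finSumEquivOfFinset rfl rfl) :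
        Fin (S.card + Sᶜ.card) ≃ Fin Z.deg) fun l => ?_⟩
    simp only [dsum, restrict, reindex_apply]
    ext i j
    -- `simp` cannot unfold the composite equivalence at the index type `Fin (_.dsum _).deg`
    change _ = Z.mat l (finSumEquivOfFinset (s := S) rfl rfl (finSumFinEquiv.symm i))
      (finSumEquivOfFinset (s := S) rfl rfl (finSumFinEquiv.symm j))
    obtain ⟨i, rfl⟩ := finSumFinEquiv.surjective i
    obtain ⟨j, rfl⟩ := finSumFinEquiv.surjective j
    rcases i with i | i <;> rcases j with j | j
    · simp
    · simp [hZ l _ _ (S.orderEmbOfFin_mem rfl i) (Finset.mem_compl.mp (Sᶜ.orderEmbOfFin_mem rfl j))]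
    · simp [hZ l _ _ (S.orderEmbOfFin_mem rfl j) (Finset.mem_compl.mp (Sᶜ.orderEmbOfFin_mem rfl i))]
    · simp

theorem restrict_levelSet_sub (Z : MatTup Λ) {d : Fin Z.deg → ℝ} {c : ℝ}
    (hZ : ∀ l i j, d i ≠ d j → Z.mat l i j = 0) (hS : (Finset.univ.filter (d · = c)).Nonempty) :
    (Z.restrict _ hS).Sub Z := by
  refine Z.restrict_sub hS fun l i j hi hj => ?_
  simp only [Finset.mem_filter, Finset.mem_univ, true_and] at hi hj
  exact ⟨hZ l i j (hi ▸ Ne.symm hj), hZ l j i (hi ▸ hj)⟩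

theorem restrict_levelSet_uequiv_of_intertwiner {X Y : MatTup Λ}
    {B : Matrix (Fin X.deg) (Fin Y.deg) ℂ} {dX : Fin X.deg → ℝ} {dY : Fin Y.deg → ℝ}
    (hdX : B * Bᴴ = diagonal fun i => (dX i : ℂ)) (hdY : Bᴴ * B = diagonal fun j => (dY j : ℂ))
    (hXB : ∀ l, X.mat l * B = B * Y.mat l) (hX0 : ∀ l i j, dX i ≠ dX j → X.mat l i j = 0)
    {c : ℝ} (hc : 0 < c) (hS : (Finset.univ.filter (dY · = c)).Nonempty)
    (hT : (Finset.univ.filter (dX · = c)).Nonempty) :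
    (Y.restrict _ hS).UEquiv (X.restrict _ hT) := by
  set S := Finset.univ.filter (dY · = c)
  set T := Finset.univ.filter (dX · = c)
  set eS := S.orderEmbOfFin rfl
  set eT := T.orderEmbOfFin rfl
  have heS : ∀ k, dY (eS k) = c := fun k => (Finset.mem_filter.mp (S.orderEmbOfFin_mem rfl k)).2
  have heT : ∀ k, dX (eT k) = c := fun k => (Finset.mem_filter.mp (T.orderEmbOfFin_mem rfl k)).2
  have hB0 {i j} (hij : dX i ≠ dY j) : B i j = 0 :=
    apply_eq_zero_of_mul_conjTranspose_eq_diagonal hdX hdY (Complex.ofReal_injective.ne hij)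
  have hBrow : ∀ a, ∀ j ∉ S, B (eT a) j = 0 := fun a j hj =>
    hB0 (by simpa [S, heT, eq_comm] using hj)
  have hBcol : ∀ b, ∀ i ∉ T, B i (eS b) = 0 := fun b i hi =>
    hB0 (by simpa [T, heS] using hi)
  have hXrow : ∀ l a, ∀ i ∉ T, X.mat l (eT a) i = 0 := fun l a i hi =>
    hX0 _ _ _ (by simpa [T, heT, eq_comm] using hi)
  set r : ℂ := (((Real.sqrt c)⁻¹ : ℝ) : ℂ)
  have hr : star r * r * c = 1 := by
    simp only [r, Complex.star_def, Complex.conj_ofReal]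
    norm_cast
    rw [← sq, inv_pow, Real.sq_sqrt hc.le, inv_mul_cancel₀ hc.ne']
  have hVV : (r • B.submatrix eT eS)ᴴ * (r • B.submatrix eT eS) = 1 := by
    rw [conjTranspose_smul, Matrix.smul_mul, Matrix.mul_smul, smul_smul, conjTranspose_submatrix,
      ← submatrix_mul_of_apply_eq_zero T _ _ fun a b i hi => by simp [hBcol b i hi], hdY,
      submatrix_diagonal _ _ eS.injective, show (fun j => (dY j : ℂ)) ∘ eS = fun _ => (c : ℂ) by
        funext k; simp [heS], ← smul_one_eq_diagonal, smul_smul, hr, one_smul]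
  have hVV' : (r • B.submatrix eT eS) * (r • B.submatrix eT eS)ᴴ = 1 := by
    rw [conjTranspose_smul, Matrix.smul_mul, Matrix.mul_smul, smul_smul, conjTranspose_submatrix,
      ← submatrix_mul_of_apply_eq_zero S _ _ fun a b j hj => by simp [hBrow a j hj], hdX,
      submatrix_diagonal _ _ eT.injective, show (fun i => (dX i : ℂ)) ∘ eT = fun _ => (c : ℂ) by
        funext k; simp [heT], ← smul_one_eq_diagonal, smul_smul, mul_comm r, hr, one_smul]
  have hVint : ∀ l, (r • B.submatrix eT eS) * (Y.mat l).submatrix eS eS =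
      (X.mat l).submatrix eT eT * (r • B.submatrix eT eS) := fun l => by
    rw [Matrix.smul_mul, Matrix.mul_smul, ← submatrix_mul_of_apply_eq_zero S _ _ fun a b j hj => by
      simp [hBrow a j hj], ← submatrix_mul_of_apply_eq_zero T _ _ fun a b i hi => by
      simp [hXrow l a i hi], hXB]
  exact uequiv_iff.mpr ⟨_, hVV, hVV', hVint⟩

open scoped ComplexOrder in
theorem not_disj_of_intertwiner_of_diagonal {X Y : MatTup Λ}
    {B : Matrix (Fin X.deg) (Fin Y.deg) ℂ} (hB : B ≠ 0) {dX : Fin X.deg → ℝ} {dY : Fin Y.deg → ℝ}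
    (hdX : B * Bᴴ = diagonal fun i => (dX i : ℂ)) (hdY : Bᴴ * B = diagonal fun j => (dY j : ℂ))
    (hXB : ∀ l, X.mat l * B = B * Y.mat l) (hYB : ∀ l, Y.mat l * Bᴴ = Bᴴ * X.mat l) :
    ¬ X.Disj Y := by
  have hX0 : ∀ l i j, dX i ≠ dX j → X.mat l i j = 0 := fun l i j hij => by
    have hcomm := commute_mul_conjTranspose_self (hXB l) (hYB l)
    rw [hdX] at hcomm
    exact apply_eq_zero_of_mul_diagonal_eq_s2 hcomm.eq (Complex.ofReal_injective.ne hij)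
  have hY0 : ∀ l i j, dY i ≠ dY j → Y.mat l i j = 0 := fun l i j hij => by
    have hcomm := commute_mul_conjTranspose_self (hYB l) (by rw [conjTranspose_conjTranspose, hXB])
    rw [conjTranspose_conjTranspose, hdY] at hcomm
    exact apply_eq_zero_of_mul_diagonal_eq_s2 hcomm.eq (Complex.ofReal_injective.ne hij)
  obtain ⟨j₀, hj₀⟩ : ∃ j, dY j ≠ 0 := by
    by_contra! h0
    exact hB (conjTranspose_mul_self_eq_zero.mp (by rw [hdY]; simp [h0]))
  set c := dY j₀
  have hc : 0 < c := by
    have := (posSemidef_conjTranspose_mul_self B).diag_nonneg (i := j₀)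
    rw [hdY, diagonal_apply_eq] at this
    exact lt_of_le_of_ne (Complex.zero_le_real.mp this) hj₀.symm
  have hS : (Finset.univ.filter (dY · = c)).Nonempty := ⟨j₀, by simp [c]⟩
  have hT : (Finset.univ.filter (dX · = c)).Nonempty := by
    by_contra hT
    have hcol : ∀ i, B i j₀ = 0 := fun i =>
      apply_eq_zero_of_mul_conjTranspose_eq_diagonal hdX hdY
        (Complex.ofReal_injective.ne fun h => hT ⟨i, by simp [h, c]⟩)
    have := congrFun (congrFun hdY j₀) j₀
    simp [mul_apply, hcol] at this
    exact hj₀ (by exact_mod_cast this.symm)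
  exact fun h => h ⟨_, (X.restrict_levelSet_sub hX0 hT).of_uequiv_left
    (restrict_levelSet_uequiv_of_intertwiner hdX hdY hXB hX0 hc hS hT),
    Y.restrict_levelSet_sub hY0 hS⟩

theorem Disj.of_uequiv {X Y X' Y' : MatTup Λ} (h : X.Disj Y) (hX : X.UEquiv X')
    (hY : Y.UEquiv Y') : X'.Disj Y' :=
  fun ⟨A, hAX, hAY⟩ => h ⟨A, hAX.of_uequiv_right hX, hAY.of_uequiv_right hY⟩

theorem not_disj_of_intertwiner {X Y : MatTup Λ} {B : Matrix (Fin X.deg) (Fin Y.deg) ℂ}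
    (hB : B ≠ 0) (hXB : ∀ l, X.mat l * B = B * Y.mat l)
    (hYB : ∀ l, Y.mat l * Bᴴ = Bᴴ * X.mat l) : ¬ X.Disj Y := by
  obtain ⟨Q, hQ, P, hP, dX, dY, hdX, hdY⟩ := exists_unitary_conj_diagonal B
  have hQinv : (star Q)⁻¹ = Q := inv_eq_right_inv (Unitary.star_mul_self_of_mem hQ)
  have hPinv : (star P)⁻¹ = P := inv_eq_right_inv (Unitary.star_mul_self_of_mem hP)
  refine fun hXY => not_disj_of_intertwiner_of_diagonal (X := X.act (star Q))
    (Y := Y.act (star P)) (B := star Q * B * P) ?_ hdX hdY (fun l => ?_) (fun l => ?_)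
    (hXY.of_uequiv ⟨star Q, Unitary.star_mem hQ, rfl⟩ ⟨star P, Unitary.star_mem hP, rfl⟩)
  · intro h0
    replace h0 : star Q * B * P = 0 := h0
    apply hB
    calc B = Q * (star Q * B * P) * star P := by
          simp only [← Matrix.mul_assoc, Unitary.mul_star_self_of_mem hQ, Matrix.one_mul]
          rw [Matrix.mul_assoc, Unitary.mul_star_self_of_mem hP, Matrix.mul_one]
      _ = 0 := by rw [h0, Matrix.mul_zero, Matrix.zero_mul]
  · show star Q * X.mat l * (star Q)⁻¹ * (star Q * B * P) =
      star Q * B * P * (star P * Y.mat l * (star P)⁻¹)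
    rw [hQinv, hPinv]
    exact conj_mul_conj_eq (Unitary.mul_star_self_of_mem hQ) (Unitary.mul_star_self_of_mem hP)
      (hXB l)
  · show star P * Y.mat l * (star P)⁻¹ * (star Q * B * P)ᴴ =
      (star Q * B * P)ᴴ * (star Q * X.mat l * (star Q)⁻¹)
    have hB'star : (star Q * B * P)ᴴ = star P * Bᴴ * Q := by
      simp [conjTranspose_mul, star_eq_conjTranspose, Matrix.mul_assoc]
    rw [hQinv, hPinv, hB'star]
    exact conj_mul_conj_eq (Unitary.mul_star_self_of_mem hP) (Unitary.mul_star_self_of_mem hQ)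
      (hYB l)

theorem mem_stab_dsum_iff {X Y : MatTup Λ}
    {M : Matrix (Fin X.deg ⊕ Fin Y.deg) (Fin X.deg ⊕ Fin Y.deg) ℂ} :
    reindex finSumFinEquiv finSumFinEquiv M ∈ (X.dsum Y).stab ↔
      M ∈ unitaryGroup _ ℂ ∧ ∀ l, Commute M (fromBlocks (X.mat l) 0 0 (Y.mat l)) := by
  refine mem_stab_iff.trans
    (and_congr (reindex_mem_unitaryGroup_iff _) (forall_congr' fun l => ?_))
  exact commute_map_iff (f := reindexRingEquiv ℂ finSumFinEquiv) (reindexRingEquiv ℂ _).injective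

theorem exists_eq_matDsum_of_mem_stab_dsum {X Y : MatTup Λ} (h : X.Disj Y)
    {W : Matrix (Fin (X.dsum Y).deg) (Fin (X.dsum Y).deg) ℂ} (hW : W ∈ (X.dsum Y).stab) :
    ∃ U ∈ X.stab, ∃ V ∈ Y.stab, W = matDsum U V := by
  obtain ⟨M, rfl⟩ := (reindex finSumFinEquiv finSumFinEquiv).surjective W
  obtain ⟨A, B, C, D, rfl⟩ : ∃ A B C D, M = fromBlocks A B C D :=
    ⟨_, _, _, _, (fromBlocks_toBlocks M).symm⟩
  obtain ⟨hMu, hMc⟩ := mem_stab_dsum_iff.mp hW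
  have hMc' := fun l => commute_star_of_mem_unitary hMu (hMc l)
  simp only [star_eq_conjTranspose, fromBlocks_conjTranspose, commute_fromBlocks_iff] at hMc hMc'
  have hB : B = 0 := by
    by_contra hB
    exact not_disj_of_intertwiner hB (fun l => (hMc l).2.1.symm) (fun l => (hMc' l).2.2.1.symm) h
  have hC : C = 0 := by
    by_contra hC
    exact not_disj_of_intertwiner hC (fun l => (hMc l).2.2.1.symm) (fun l => (hMc' l).2.1.symm)
      h.symm
  subst hB hC
  obtain ⟨hA, hD⟩ := fromBlocks_zero_mem_unitaryGroup_iff.mp hMu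
  exact ⟨A, mem_stab_iff.mpr ⟨hA, fun l => (hMc l).1⟩, D,
    mem_stab_iff.mpr ⟨hD, fun l => (hMc l).2.2.2⟩, rfl⟩

theorem matDsum_mem_stab_dsum {X Y : MatTup Λ} {U : Matrix (Fin X.deg) (Fin X.deg) ℂ}
    {V : Matrix (Fin Y.deg) (Fin Y.deg) ℂ} (hU : U ∈ X.stab) (hV : V ∈ Y.stab) :
    matDsum U V ∈ (X.dsum Y).stab := by
  rw [mem_stab_iff] at hU hV
  refine mem_stab_dsum_iff.mpr ⟨fromBlocks_zero_mem_unitaryGroup_iff.mpr ⟨hU.1, hV.1⟩, fun l => ?_⟩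
  exact commute_fromBlocks_iff.mpr ⟨hU.2 l, by simp, by simp, hV.2 l⟩

end MatTup

theorem stmt_2_general {Λ : Type*} (X Y : MatTup Λ) (h : X.Disj Y) :
    (X.dsum Y).stab = {W | ∃ U ∈ X.stab, ∃ V ∈ Y.stab, W = matDsum U V} := by
  ext W
  constructor
  · exact MatTup.exists_eq_matDsum_of_mem_stab_dsum h
  · rintro ⟨U, hU, V, hV, rfl⟩
    exact MatTup.matDsum_mem_stab_dsum hU hV

/-- If `X ⊥ Y`, then
`stab(X ⊕ Y) = {U ⊕ V : U ∈ stab(X), V ∈ stab(Y)}`. -/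
theorem stmt_2 {Λ : Type*} [Nonempty Λ] (X Y : MatTup Λ) (h : X.Disj Y) :
    (X.dsum Y).stab = {W | ∃ U ∈ X.stab, ∃ V ∈ Y.stab, W = matDsum U V} :=
  stmt_2_general X Y h
end
end

section
/- Let T_1, …, T_n be irreducible tuples of complex matrices over an index set Λ, let τ be a permutation of {1,…,n}, and let N = Σ_{j=1}^n d(T_j). Let A_1, …, A_n be single complex matrices such that (ax1) A_j is a d(T_j)×d(T_j) matrix for each j, and (ax2) whenever j, k ∈ {1,…,n} and V ∈ U_{d(T_j)} satisfy V.T_j = T_k, then V A_j V⁻¹ = A_k. Then every unitary U ∈ U_N satisfying U.(T_1 ⊕ ⋯ ⊕ T_n) = T_{τ(1)} ⊕ ⋯ ⊕ T_{τ(n)} also satisfies U (A_1 ⊕ ⋯ ⊕ A_n) U⁻¹ = A_{τ(1)} ⊕ ⋯ ⊕ A_{τ(n)}. -/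
noncomputable section

/-- The constant tuple whose every entry is the single matrix `M`. -/
def constTup {Λ : Type*} {N : ℕ} (hN : 0 < N) (M : Matrix (Fin N) (Fin N) ℂ) : MatTup Λ :=
  ⟨N, hN, fun _ => M⟩

/-!
Cut `U` into blocks `U k j : ℂ^{d(T j)} → ℂ^{d(T (τ k))}`. Since `U` is unitary and intertwines
`⊕ T j` with `⊕ T (τ k)`, each block satisfies `U k j * T j = T (τ k) * U k j` and
`(U k j)ᴴ * T (τ k) = T j * (U k j)ᴴ`. Hence `(U k j)ᴴ * U k j` and `U k j * (U k j)ᴴ` are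
Hermitian matrices commuting with the irreducible tuples `T j` and `T (τ k)`, so they are scalars
(the eigenspaces of a non-scalar one would split the tuple). Comparing
`U k j * ((U k j)ᴴ * U k j) = (U k j * (U k j)ᴴ) * U k j` shows that both scalars equal the same
`c`, so either `U k j = 0` or `U k j = √c • V` for a unitary `V` with `V.(T j) = T (τ k)`, and
then (ax2) gives `U k j * A j = A (τ k) * U k j`. Reassembling the blocks yields
`U * (⊕ A j) = (⊕ A (τ k)) * U`.
-/

namespace Matrix

variable {l m n o l' m' n' o' R : Type*}

theorem card_eq_of_mul_eq_one [Fintype m] [Fintype n] [DecidableEq m] [DecidableEq n]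
    [CommSemiring R] [CharZero R] {V : Matrix m n R} {W : Matrix n m R}
    (hVW : V * W = 1) (hWV : W * V = 1) : Fintype.card m = Fintype.card n := by
  have := congrArg trace hVW
  rw [trace_mul_comm, hWV, trace_one, trace_one] at this
  exact_mod_cast this.symm

theorem apply_eq_zero_of_commute_diagonal [Fintype n] [DecidableEq n] [CommRing R] [IsDomain R]
    {d : n → R} {Z : Matrix n n R} (hZ : Commute (diagonal d) Z) {i j : n} (hij : d i ≠ d j) :
    Z i j = 0 := by
  have := congrFun (congrFun hZ.eq i) j
  rw [diagonal_mul, mul_diagonal, mul_comm] at this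
  by_contra hne
  exact hij (mul_left_cancel₀ hne this)

theorem reindex_mul_reindex [Fintype m] [Fintype m'] [NonUnitalNonAssocSemiring R]
    (e₁ : l ≃ l') (e₂ : m ≃ m') (e₃ : o ≃ o') (M : Matrix l m R) (N : Matrix m o R) :
    reindex e₁ e₂ M * reindex e₂ e₃ N = reindex e₁ e₃ (M * N) := by
  simp

theorem reindex_mul_eq_mul_reindex_iff [Fintype m] [Fintype m'] [Fintype n] [Fintype n']
    [NonUnitalNonAssocSemiring R] (e₁ : m ≃ m') (e₂ : n ≃ n') {V : Matrix m n R}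
    {X : Matrix n n R} {Y : Matrix m m R} :
    reindex e₁ e₂ V * reindex e₂ e₂ X = reindex e₁ e₁ Y * reindex e₁ e₂ V ↔ V * X = Y * V := by
  rw [reindex_mul_reindex, reindex_mul_reindex, (reindex e₁ e₂).injective.eq_iff]

theorem reindex_mul_reindex_eq_one [Fintype n] [Fintype n'] [DecidableEq m] [DecidableEq m']
    [NonAssocSemiring R] (e₁ : m ≃ m') (e₂ : n ≃ n') {M : Matrix m n R} {N : Matrix n m R}
    (h : M * N = 1) : reindex e₁ e₂ M * reindex e₂ e₁ N = 1 := by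
  rw [reindex_mul_reindex, h, reindex_apply, submatrix_one_equiv]

theorem reindex_mem_unitaryGroup [Fintype m] [DecidableEq m] [Fintype m'] [DecidableEq m']
    [CommRing R] [StarRing R] (e : m ≃ m') {U : Matrix m m R} (hU : U ∈ unitaryGroup m R) :
    reindex e e U ∈ unitaryGroup m' R := by
  rw [mem_unitaryGroup_iff, star_eq_conjTranspose, conjTranspose_reindex]
  rw [mem_unitaryGroup_iff, star_eq_conjTranspose] at hU
  exact reindex_mul_reindex_eq_one e e hU

theorem fromBlocks_reindex (e₁ : l ≃ l') (e₂ : m ≃ m') (e₃ : n ≃ n') (e₄ : o ≃ o')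
    (A : Matrix l n R) (B : Matrix l o R) (C : Matrix m n R) (D : Matrix m o R) :
    fromBlocks (reindex e₁ e₃ A) (reindex e₁ e₄ B) (reindex e₂ e₃ C) (reindex e₂ e₄ D) =
      reindex (e₁.sumCongr e₂) (e₃.sumCongr e₄) (fromBlocks A B C D) := by
  ext (i | i) (j | j) <;> rfl

variable {ι κ : Type*} {μ ρ : κ → Type*} {ν π : ι → Type*}

theorem mul_blockDiagonal'_submatrix_sigmaMk [Fintype ι] [DecidableEq ι] [∀ i, Fintype (ν i)]
    [NonUnitalNonAssocSemiring R] (W : Matrix (Σ k, μ k) (Σ i, ν i) R)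
    (M : ∀ i, Matrix (ν i) (π i) R) (k : κ) (i : ι) :
    (W * blockDiagonal' M).submatrix (Sigma.mk k) (Sigma.mk i) =
      W.submatrix (Sigma.mk k) (Sigma.mk i) * M i := by
  ext a b
  simp [mul_apply, Fintype.sum_sigma, blockDiagonal'_apply]

theorem blockDiagonal'_mul_submatrix_sigmaMk [Fintype κ] [DecidableEq κ] [∀ k, Fintype (μ k)]
    [NonUnitalNonAssocSemiring R] (W : Matrix (Σ k, μ k) (Σ i, ν i) R)
    (M : ∀ k, Matrix (ρ k) (μ k) R) (k : κ) (i : ι) :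
    (blockDiagonal' M * W).submatrix (Sigma.mk k) (Sigma.mk i) =
      M k * W.submatrix (Sigma.mk k) (Sigma.mk i) := by
  ext a b
  simp [mul_apply, Fintype.sum_sigma, blockDiagonal'_apply]

end Matrix

open Matrix

namespace MatTup

variable {Λ : Type*}

/-! A unitary between tuples of degrees `m` and `n` is handled as a rectangular matrix
`V : Matrix (Fin n) (Fin m) ℂ` with `V * Vᴴ = 1` and `Vᴴ * V = 1`; this avoids transporting
square matrices along `m = n`. -/

theorem act_eq_iff {X Y : MatTup Λ} {U : Matrix (Fin X.deg) (Fin X.deg) ℂ}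
    (hU : U ∈ unitaryGroup (Fin X.deg) ℂ) :
    X.act U = Y ↔ ∃ h : X.deg = Y.deg, ∀ l,
      reindex (finCongr h) (.refl _) U * X.mat l = Y.mat l * reindex (finCongr h) (.refl _) U := by
  have hdet : IsUnit U.det := UnitaryGroup.det_isUnit ⟨U, hU⟩
  constructor
  · rintro rfl
    refine ⟨rfl, fun l => ?_⟩
    change U * X.mat l = U * X.mat l * U⁻¹ * U
    rw [Matrix.mul_assoc _ U⁻¹, nonsing_inv_mul _ hdet, Matrix.mul_one]
  · rintro ⟨h, hUXY⟩
    revert hUXY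
    obtain ⟨d, hd, f⟩ := Y
    dsimp only at h ⊢
    subst h
    intro hUXY
    simp only [finCongr_refl, reindex_refl_refl] at hUXY
    simp only [act, mk.injEq, heq_eq_eq, true_and]
    funext l
    rw [hUXY, Matrix.mul_assoc, mul_nonsing_inv _ hdet, Matrix.mul_one]

theorem exists_act_eq_of_intertwiner {X Y : MatTup Λ} (V : Matrix (Fin Y.deg) (Fin X.deg) ℂ)
    (hV₁ : V * Vᴴ = 1) (hV₂ : Vᴴ * V = 1) (hVXY : ∀ l, V * X.mat l = Y.mat l * V) :
    ∃ U ∈ unitaryGroup (Fin X.deg) ℂ, X.act U = Y ∧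
      ∀ h : X.deg = Y.deg, reindex (finCongr h) (.refl _) U = V := by
  have h : X.deg = Y.deg := by simpa using card_eq_of_mul_eq_one hV₂ hV₁
  set U := reindex (finCongr h).symm (.refl _) V
  have hUV : ∀ h : X.deg = Y.deg, reindex (finCongr h) (.refl _) U = V := fun _ => by
    ext
    simp [U]
  have hU : U ∈ unitaryGroup (Fin X.deg) ℂ := by
    rw [mem_unitaryGroup_iff, star_eq_conjTranspose]
    exact reindex_mul_reindex_eq_one _ _ hV₁
  exact ⟨U, hU, (act_eq_iff hU).2 ⟨h, fun l => by rw [hUV, hVXY]⟩, hUV⟩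

theorem mul_eq_of_forall_act_eq_constTup [Nonempty Λ] {X Y : MatTup Λ}
    {AX : Matrix (Fin X.deg) (Fin X.deg) ℂ} {AY : Matrix (Fin Y.deg) (Fin Y.deg) ℂ}
    (hA : ∀ V ∈ unitaryGroup (Fin X.deg) ℂ, X.act V = Y →
      (constTup (Λ := Λ) X.deg_pos AX).act V = constTup Y.deg_pos AY)
    (V : Matrix (Fin Y.deg) (Fin X.deg) ℂ) (hV₁ : V * Vᴴ = 1) (hV₂ : Vᴴ * V = 1)
    (hVXY : ∀ l, V * X.mat l = Y.mat l * V) : V * AX = AY * V := by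
  obtain ⟨U, hU, hXU, hUV⟩ := exists_act_eq_of_intertwiner V hV₁ hV₂ hVXY
  obtain ⟨h, hUA⟩ := (act_eq_iff (X := constTup (Λ := Λ) X.deg_pos AX) hU).1 (hA U hU hXU)
  rw [← hUV h]
  exact hUA (Classical.arbitrary Λ)

theorem Irred.not_forall_toBlocks_eq_zero {X : MatTup Λ} (hX : X.Irred) {α β : Type*}
    [Fintype α] [Fintype β] [DecidableEq α] [DecidableEq β] [Nonempty α] [Nonempty β]
    (Q : Matrix (Fin X.deg) (α ⊕ β) ℂ) (hQ₁ : Q * Qᴴ = 1) (hQ₂ : Qᴴ * Q = 1) :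
    ¬ ∀ l, (Qᴴ * X.mat l * Q).toBlocks₁₂ = 0 ∧ (Qᴴ * X.mat l * Q).toBlocks₂₁ = 0 := by
  intro hblk
  let eα := Fintype.equivFin α
  let eβ := Fintype.equivFin β
  let A : MatTup Λ :=
    ⟨_, Fintype.card_pos, fun l => reindex eα eα (Qᴴ * X.mat l * Q).toBlocks₁₁⟩
  let B : MatTup Λ :=
    ⟨_, Fintype.card_pos, fun l => reindex eβ eβ (Qᴴ * X.mat l * Q).toBlocks₂₂⟩
  let e : α ⊕ β ≃ Fin (A.dsum B).deg := (eα.sumCongr eβ).trans finSumFinEquiv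
  have hAB : ∀ l, (A.dsum B).mat l = reindex e e (Qᴴ * X.mat l * Q) := fun l => by
    conv_rhs => rw [← fromBlocks_toBlocks (Qᴴ * X.mat l * Q), (hblk l).1, (hblk l).2]
    show reindex finSumFinEquiv finSumFinEquiv
        (fromBlocks (reindex eα eα _) 0 0 (reindex eβ eβ _)) = reindex e e _
    rw [show (0 : Matrix (Fin A.deg) (Fin B.deg) ℂ) = reindex eα eβ 0 from rfl,
      show (0 : Matrix (Fin B.deg) (Fin A.deg) ℂ) = reindex eβ eα 0 from rfl, fromBlocks_reindex]
    rfl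
  have hQX : ∀ l, Qᴴ * X.mat l * Q * Qᴴ = Qᴴ * X.mat l := fun l => by
    rw [Matrix.mul_assoc, hQ₁, Matrix.mul_one]
  obtain ⟨U, hU, hXU, -⟩ :=
    exists_act_eq_of_intertwiner (Y := A.dsum B) (reindex e (.refl _) Qᴴ)
      (by rw [conjTranspose_reindex, conjTranspose_conjTranspose]
          exact reindex_mul_reindex_eq_one _ _ hQ₂)
      (by rw [conjTranspose_reindex, conjTranspose_conjTranspose]
          exact reindex_mul_reindex_eq_one _ _ hQ₁)
      fun l => by
        rw [hAB, reindex_mul_reindex, hQX, ← reindex_mul_reindex e (.refl _) (.refl _),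
          reindex_refl_refl]
  exact hX ⟨A, B, U, hU, hXU⟩

theorem Irred.apply_eq_of_commute_diagonal {X : MatTup Λ} (hX : X.Irred)
    {W : Matrix (Fin X.deg) (Fin X.deg) ℂ} (hW₁ : W * Wᴴ = 1) (hW₂ : Wᴴ * W = 1)
    {d : Fin X.deg → ℂ} (hd : ∀ l, Commute (diagonal d) (Wᴴ * X.mat l * W)) (i j : Fin X.deg) :
    d i = d j := by
  by_contra hij
  let p : Fin X.deg → Prop := fun k => d k = d i
  have : Nonempty {k // p k} := ⟨⟨i, rfl⟩⟩
  have : Nonempty {k // ¬ p k} := ⟨⟨j, fun h => hij h.symm⟩⟩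
  have hvanish : ∀ l a b, p a → ¬ p b →
      (Wᴴ * X.mat l * W) a b = 0 ∧ (Wᴴ * X.mat l * W) b a = 0 := fun l a b ha hb =>
    have hab : d a ≠ d b := fun h => hb (h.symm.trans ha)
    ⟨apply_eq_zero_of_commute_diagonal (hd l) hab,
      apply_eq_zero_of_commute_diagonal (hd l) hab.symm⟩
  -- `Q` lists the columns of `W` with the `d i`-block first; it splits `X` into two blocks.
  let Q := reindex (.refl _) (Equiv.sumCompl p).symm W
  refine hX.not_forall_toBlocks_eq_zero Q ?_ ?_ fun l => ?_
  · rw [conjTranspose_reindex]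
    exact reindex_mul_reindex_eq_one _ _ hW₁
  · rw [conjTranspose_reindex]
    exact reindex_mul_reindex_eq_one _ _ hW₂
  have hQ : Qᴴ * X.mat l * Q =
      reindex (Equiv.sumCompl p).symm (Equiv.sumCompl p).symm (Wᴴ * X.mat l * W) := by
    conv_lhs => rw [← reindex_refl_refl (X.mat l)]
    rw [conjTranspose_reindex, reindex_mul_reindex, reindex_mul_reindex]
  rw [hQ]
  constructor
  · ext ⟨a, ha⟩ ⟨b, hb⟩
    exact (hvanish l a b ha hb).1
  · ext ⟨a, ha⟩ ⟨b, hb⟩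
    exact (hvanish l b a hb ha).2

theorem Irred.exists_eq_smul_one_of_commute {X : MatTup Λ} (hX : X.Irred)
    {H : Matrix (Fin X.deg) (Fin X.deg) ℂ} (hH : H.IsHermitian)
    (hHX : ∀ l, Commute H (X.mat l)) : ∃ c : ℝ, H = (c : ℂ) • 1 := by
  set W : Matrix (Fin X.deg) (Fin X.deg) ℂ := hH.eigenvectorUnitary.1
  set ev := hH.eigenvalues
  have hW₁ : W * Wᴴ = 1 := Unitary.mul_star_self_of_mem hH.eigenvectorUnitary.2
  have hW₂ : Wᴴ * W = 1 := Unitary.star_mul_self_of_mem hH.eigenvectorUnitary.2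
  have hdiag : Wᴴ * H * W = diagonal (RCLike.ofReal ∘ ev) := by
    rw [← star_eq_conjTranspose]
    simpa using hH.conjStarAlgAut_star_eigenvectorUnitary
  have hcomm : ∀ l, Commute (diagonal (RCLike.ofReal ∘ ev)) (Wᴴ * X.mat l * W) := fun l => by
    rw [← hdiag]
    calc Wᴴ * H * W * (Wᴴ * X.mat l * W) = Wᴴ * H * (W * Wᴴ) * X.mat l * W := by
          simp only [Matrix.mul_assoc]
      _ = Wᴴ * X.mat l * (W * Wᴴ) * H * W := by
          rw [hW₁, Matrix.mul_one, Matrix.mul_one, Matrix.mul_assoc _ H, (hHX l).eq]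
          simp only [Matrix.mul_assoc]
      _ = Wᴴ * X.mat l * W * (Wᴴ * H * W) := by
          simp only [Matrix.mul_assoc]
  let i₀ : Fin X.deg := ⟨0, X.deg_pos⟩
  have hscalar : diagonal (RCLike.ofReal ∘ ev) = ((ev i₀ : ℝ) : ℂ) • (1 : Matrix _ _ ℂ) := by
    have hev : ∀ i, ((ev i : ℝ) : ℂ) = ev i₀ := fun i =>
      hX.apply_eq_of_commute_diagonal hW₁ hW₂ hcomm i i₀
    ext i j
    simp [diagonal_apply, one_apply, hev]
  refine ⟨ev i₀, ?_⟩
  calc H = W * (Wᴴ * H * W) * Wᴴ := by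
        simp only [← Matrix.mul_assoc, hW₁, Matrix.one_mul]
        rw [Matrix.mul_assoc, hW₁, Matrix.mul_one]
    _ = _ := by rw [hdiag, hscalar, Matrix.mul_smul, Matrix.mul_one, Matrix.smul_mul, hW₁]

open scoped ComplexOrder in
theorem Irred.mul_eq_of_intertwiner {X Y : MatTup Λ} (hX : X.Irred) (hY : Y.Irred)
    {AX : Matrix (Fin X.deg) (Fin X.deg) ℂ} {AY : Matrix (Fin Y.deg) (Fin Y.deg) ℂ}
    (hA : ∀ V : Matrix (Fin Y.deg) (Fin X.deg) ℂ, V * Vᴴ = 1 → Vᴴ * V = 1 →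
      (∀ l, V * X.mat l = Y.mat l * V) → V * AX = AY * V)
    {M : Matrix (Fin Y.deg) (Fin X.deg) ℂ} (hM : ∀ l, M * X.mat l = Y.mat l * M)
    (hMH : ∀ l, Mᴴ * Y.mat l = X.mat l * Mᴴ) : M * AX = AY * M := by
  by_cases hM0 : M = 0
  · simp [hM0]
  obtain ⟨c, hc⟩ := hX.exists_eq_smul_one_of_commute (isHermitian_conjTranspose_mul_self M)
    fun l => by
      rw [commute_iff_eq, Matrix.mul_assoc, hM, ← Matrix.mul_assoc, hMH, Matrix.mul_assoc]
  obtain ⟨c', hc'⟩ := hY.exists_eq_smul_one_of_commute (isHermitian_mul_conjTranspose_self M)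
    fun l => by
      rw [commute_iff_eq, Matrix.mul_assoc, hMH, ← Matrix.mul_assoc, hM, Matrix.mul_assoc]
  have hcc' : c' = c := by
    have h := Matrix.mul_assoc M Mᴴ M
    rw [hc, hc', Matrix.smul_mul, Matrix.mul_smul, Matrix.one_mul, Matrix.mul_one] at h
    exact_mod_cast smul_left_injective ℂ hM0 h
  have hc0 : 0 < c := by
    have hdiag : 0 ≤ (Mᴴ * M) ⟨0, X.deg_pos⟩ ⟨0, X.deg_pos⟩ :=
      (posSemidef_conjTranspose_mul_self M).diag_nonneg
    rw [hc] at hdiag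
    refine lt_of_le_of_ne (by simpa using hdiag) fun h0 => hM0 ?_
    rw [← conjTranspose_mul_self_eq_zero, hc, ← h0]
    simp
  set r : ℝ := Real.sqrt c
  have hr : (r : ℂ) ≠ 0 := by exact_mod_cast (Real.sqrt_pos.mpr hc0).ne'
  have hrr : (r : ℂ)⁻¹ * (r : ℂ)⁻¹ * c = 1 := by
    rw [← mul_inv, ← Complex.ofReal_mul, Real.mul_self_sqrt hc0.le, inv_mul_cancel₀]
    exact_mod_cast hc0.ne'
  have hVH : ((r : ℂ)⁻¹ • M)ᴴ = (r : ℂ)⁻¹ • Mᴴ := by simp [conjTranspose_smul]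
  have hVA := hA ((r : ℂ)⁻¹ • M)
    (by rw [hVH, Matrix.smul_mul, Matrix.mul_smul, smul_smul, hc', hcc', smul_smul, hrr,
      one_smul])
    (by rw [hVH, Matrix.smul_mul, Matrix.mul_smul, smul_smul, hc, smul_smul, hrr, one_smul])
    fun l => by rw [Matrix.smul_mul, hM, Matrix.mul_smul]
  simpa [hr] using hVA

theorem mul_blockDiagonal'_eq_of_intertwiner {ι κ : Type*} [Fintype ι] [DecidableEq ι]
    [Fintype κ] [DecidableEq κ] {S : ι → MatTup Λ} {R : κ → MatTup Λ} (hS : ∀ i, (S i).Irred)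
    (hR : ∀ k, (R k).Irred) {AS : ∀ i, Matrix (Fin (S i).deg) (Fin (S i).deg) ℂ}
    {AR : ∀ k, Matrix (Fin (R k).deg) (Fin (R k).deg) ℂ}
    (hA : ∀ i k (V : Matrix (Fin (R k).deg) (Fin (S i).deg) ℂ), V * Vᴴ = 1 → Vᴴ * V = 1 →
      (∀ l, V * (S i).mat l = (R k).mat l * V) → V * AS i = AR k * V)
    {W : Matrix (Σ k, Fin (R k).deg) (Σ i, Fin (S i).deg) ℂ} (hW₁ : W * Wᴴ = 1)
    (hW₂ : Wᴴ * W = 1)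
    (hWSR : ∀ l, W * blockDiagonal' (fun i => (S i).mat l) =
      blockDiagonal' (fun k => (R k).mat l) * W) :
    W * blockDiagonal' AS = blockDiagonal' AR * W := by
  have hWRS : ∀ l, Wᴴ * blockDiagonal' (fun k => (R k).mat l) =
      blockDiagonal' (fun i => (S i).mat l) * Wᴴ := fun l => by
    calc Wᴴ * blockDiagonal' (fun k => (R k).mat l)
        = Wᴴ * (blockDiagonal' (fun k => (R k).mat l) * W) * Wᴴ := by
          rw [Matrix.mul_assoc, Matrix.mul_assoc, hW₁, Matrix.mul_one]
      _ = blockDiagonal' (fun i => (S i).mat l) * Wᴴ := by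
          rw [← hWSR, ← Matrix.mul_assoc, hW₂, Matrix.one_mul]
  have hblock : ∀ k i, W.submatrix (Sigma.mk k) (Sigma.mk i) * AS i =
      AR k * W.submatrix (Sigma.mk k) (Sigma.mk i) := fun k i =>
    (hS i).mul_eq_of_intertwiner (hR k) (hA i k)
      (fun l => by
        rw [← mul_blockDiagonal'_submatrix_sigmaMk W (fun i => (S i).mat l), hWSR,
          blockDiagonal'_mul_submatrix_sigmaMk])
      (fun l => by
        rw [conjTranspose_submatrix,
          ← mul_blockDiagonal'_submatrix_sigmaMk Wᴴ (fun k => (R k).mat l), hWRS,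
          blockDiagonal'_mul_submatrix_sigmaMk])
  ext ⟨k, a⟩ ⟨i, b⟩
  have := congrFun (congrFun (hblock k i) a) b
  rwa [← mul_blockDiagonal'_submatrix_sigmaMk W AS,
    ← blockDiagonal'_mul_submatrix_sigmaMk W AR] at this

theorem deg_bigDsum : ∀ {k : ℕ} (S : Fin k → MatTup Λ) (hk : 0 < k),
    (bigDsum S hk).deg = ∑ j, (S j).deg
  | 0, _, h => absurd h (lt_irrefl 0)
  | 1, S, _ => by simp [bigDsum]
  | k + 2, S, _ => by
    rw [Fin.sum_univ_castSucc, ← deg_bigDsum (fun j : Fin (k + 1) => S j.castSucc) k.succ_pos]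
    rfl

def blockEquiv {k : ℕ} (S : Fin k → MatTup Λ) (hk : 0 < k) :
    (Σ j, Fin (S j).deg) ≃ Fin (bigDsum S hk).deg :=
  finSigmaFinEquiv.trans (finCongr (deg_bigDsum S hk).symm)

@[simp]
theorem val_blockEquiv {k : ℕ} (S : Fin k → MatTup Λ) (hk : 0 < k) (p : Σ j, Fin (S j).deg) :
    (blockEquiv S hk p : ℕ) = finSigmaFinEquiv p := rfl

theorem blockEquiv_castSucc {k : ℕ} (S : Fin (k + 2) → MatTup Λ) (hk : 0 < k + 2)
    (j : Fin (k + 1)) (a : Fin (S j.castSucc).deg) :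
    blockEquiv S hk ⟨j.castSucc, a⟩ = Fin.castAdd (S (Fin.last _)).deg
      (blockEquiv (fun j : Fin (k + 1) => S j.castSucc) k.succ_pos ⟨j, a⟩) := by
  ext
  simp

theorem blockEquiv_last {k : ℕ} (S : Fin (k + 2) → MatTup Λ) (hk : 0 < k + 2)
    (a : Fin (S (Fin.last _)).deg) :
    blockEquiv S hk ⟨Fin.last _, a⟩ =
      Fin.natAdd (bigDsum (fun j : Fin (k + 1) => S j.castSucc) k.succ_pos).deg a := by
  ext
  simp only [val_blockEquiv, finSigmaFinEquiv_apply, Fin.val_last, Fin.val_natAdd, deg_bigDsum]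
  rfl

theorem mat_bigDsum_blockEquiv : ∀ {k : ℕ} (S : Fin k → MatTup Λ) (hk : 0 < k) (l : Λ)
    (p q : Σ j, Fin (S j).deg),
    (bigDsum S hk).mat l (blockEquiv S hk p) (blockEquiv S hk q) =
      blockDiagonal' (fun j => (S j).mat l) p q
  | 0, _, h, _, _, _ => absurd h (lt_irrefl 0)
  | 1, S, hk, l, ⟨i, a⟩, ⟨j, b⟩ => by
    obtain rfl : i = 0 := Subsingleton.elim _ _
    obtain rfl : j = 0 := Subsingleton.elim _ _
    have h0 : ∀ a, blockEquiv S hk ⟨0, a⟩ = a := fun a => Fin.ext (finSigmaFinEquiv_one _)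
    rw [h0, h0, blockDiagonal'_apply_eq]
    rfl
  | k + 2, S, hk, l, ⟨i, a⟩, ⟨j, b⟩ => by
    induction i using Fin.lastCases <;> induction j using Fin.lastCases <;>
      simp only [blockEquiv_castSucc, blockEquiv_last] <;>
      simp [bigDsum, dsum, blockDiagonal'_apply, mat_bigDsum_blockEquiv,
        (Fin.castSucc_ne_last _).symm]

theorem mat_bigDsum {k : ℕ} (S : Fin k → MatTup Λ) (hk : 0 < k) (l : Λ) :
    (bigDsum S hk).mat l =
      reindex (blockEquiv S hk) (blockEquiv S hk) (blockDiagonal' fun j => (S j).mat l) := by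
  ext i j
  obtain ⟨p, rfl⟩ := (blockEquiv S hk).surjective i
  obtain ⟨q, rfl⟩ := (blockEquiv S hk).surjective j
  simp [mat_bigDsum_blockEquiv]

def blockMatrix {k k' : ℕ} {S : Fin k → MatTup Λ} {R : Fin k' → MatTup Λ} {hk : 0 < k}
    {hk' : 0 < k'} (h : (bigDsum S hk).deg = (bigDsum R hk').deg)
    (U : Matrix (Fin (bigDsum S hk).deg) (Fin (bigDsum S hk).deg) ℂ) :
    Matrix (Σ j, Fin (R j).deg) (Σ i, Fin (S i).deg) ℂ :=
  reindex ((finCongr h).trans (blockEquiv R hk').symm) (blockEquiv S hk).symm U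

theorem act_bigDsum_eq_iff {k k' : ℕ} {S : Fin k → MatTup Λ} {R : Fin k' → MatTup Λ}
    {hk : 0 < k} {hk' : 0 < k'} {U : Matrix (Fin (bigDsum S hk).deg) (Fin (bigDsum S hk).deg) ℂ}
    (hU : U ∈ unitaryGroup (Fin (bigDsum S hk).deg) ℂ) :
    (bigDsum S hk).act U = bigDsum R hk' ↔ ∃ h : (bigDsum S hk).deg = (bigDsum R hk').deg, ∀ l,
      blockMatrix h U * blockDiagonal' (fun i => (S i).mat l) =
        blockDiagonal' (fun j => (R j).mat l) * blockMatrix h U := by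
  refine (act_eq_iff hU).trans (exists_congr fun h => forall_congr' fun l => ?_)
  have hUblock : reindex (blockEquiv R hk') (blockEquiv S hk) (blockMatrix h U) =
      reindex (finCongr h) (.refl _) U := by
    ext
    simp [blockMatrix]
  rw [← reindex_mul_eq_mul_reindex_iff (blockEquiv R hk') (blockEquiv S hk), hUblock,
    ← mat_bigDsum, ← mat_bigDsum]

theorem act_bigDsum_constTup_eq {k k' : ℕ} {S : Fin k → MatTup Λ} {R : Fin k' → MatTup Λ}
    {hk : 0 < k} {hk' : 0 < k'} {AS : ∀ i, Matrix (Fin (S i).deg) (Fin (S i).deg) ℂ}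
    {AR : ∀ j, Matrix (Fin (R j).deg) (Fin (R j).deg) ℂ}
    {U : Matrix (Fin (bigDsum S hk).deg) (Fin (bigDsum S hk).deg) ℂ}
    (hU : U ∈ unitaryGroup (Fin (bigDsum S hk).deg) ℂ)
    (hd : (bigDsum S hk).deg = (bigDsum R hk').deg)
    (h : (bigDsum (fun i => constTup (Λ := Λ) (S i).deg_pos (AS i)) hk).deg = (bigDsum S hk).deg)
    (hUA : blockMatrix hd U * blockDiagonal' AS = blockDiagonal' AR * blockMatrix hd U) :
    (bigDsum (fun i => constTup (Λ := Λ) (S i).deg_pos (AS i)) hk).act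
        (reindex (finCongr h.symm) (finCongr h.symm) U) =
      bigDsum (fun j => constTup (Λ := Λ) (R j).deg_pos (AR j)) hk' := by
  have hd' : (bigDsum (fun i => constTup (Λ := Λ) (S i).deg_pos (AS i)) hk).deg =
      (bigDsum (fun j => constTup (Λ := Λ) (R j).deg_pos (AR j)) hk').deg := by
    rw [h, hd, deg_bigDsum, deg_bigDsum]
    rfl
  exact (act_bigDsum_eq_iff (reindex_mem_unitaryGroup _ hU)).2 ⟨hd', fun _ => hUA⟩

end MatTup

open MatTup

/-- key lemma. Let `T 0, …, T (n-1)` be irreducible tuples, `τ` a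
permutation, and `A j` single matrices with `d(A j) = d(T j)` (ax1) such that whenever
`V.(T j) = T k` for a unitary `V`, then `V (A j) V⁻¹ = A k` (ax2, phrased via constant
tuples). Then any unitary `U` with `U.(T 0 ⊕ ⋯ ⊕ T (n-1)) = T (τ 0) ⊕ ⋯ ⊕ T (τ (n-1))`
also satisfies `U (A 0 ⊕ ⋯ ⊕ A (n-1)) U⁻¹ = A (τ 0) ⊕ ⋯ ⊕ A (τ (n-1))` (again phrased via
constant tuples, transporting `U` along the trivial degree identity `h`). -/
theorem stmt_4 {Λ : Type*} [Nonempty Λ] {n : ℕ} (hn : 0 < n) (T : Fin n → MatTup Λ)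
    (hT : ∀ j, (T j).Irred) (τ : Equiv.Perm (Fin n))
    (A : (j : Fin n) → Matrix (Fin (T j).deg) (Fin (T j).deg) ℂ)
    (hA : ∀ (j k : Fin n) (V : Matrix (Fin (T j).deg) (Fin (T j).deg) ℂ),
      V ∈ Matrix.unitaryGroup (Fin (T j).deg) ℂ → (T j).act V = T k →
      (constTup (Λ := Λ) (T j).deg_pos (A j)).act V = constTup (T k).deg_pos (A k))
    (U : Matrix (Fin (MatTup.bigDsum T hn).deg) (Fin (MatTup.bigDsum T hn).deg) ℂ)
    (hU : U ∈ Matrix.unitaryGroup (Fin (MatTup.bigDsum T hn).deg) ℂ)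
    (hUT : (MatTup.bigDsum T hn).act U = MatTup.bigDsum (fun j => T (τ j)) hn)
    (h : (MatTup.bigDsum (fun j => constTup (Λ := Λ) (T j).deg_pos (A j)) hn).deg
        = (MatTup.bigDsum T hn).deg) :
    (MatTup.bigDsum (fun j => constTup (Λ := Λ) (T j).deg_pos (A j)) hn).act
        (Matrix.reindex (finCongr h.symm) (finCongr h.symm) U)
      = MatTup.bigDsum (fun j => constTup (Λ := Λ) (T (τ j)).deg_pos (A (τ j))) hn := by
  obtain ⟨hd, hUT⟩ := (act_bigDsum_eq_iff hU).1 hUT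
  have hU₁ : blockMatrix hd U * (blockMatrix hd U)ᴴ = 1 := by
    rw [blockMatrix, conjTranspose_reindex]
    exact reindex_mul_reindex_eq_one _ _ (mem_unitaryGroup_iff.1 hU)
  have hU₂ : (blockMatrix hd U)ᴴ * blockMatrix hd U = 1 := by
    rw [blockMatrix, conjTranspose_reindex]
    exact reindex_mul_reindex_eq_one _ _ (mem_unitaryGroup_iff'.1 hU)
  exact act_bigDsum_constTup_eq hU hd h <|
    mul_blockDiagonal'_eq_of_intertwiner hT (fun k => hT (τ k))
      (fun i k => mul_eq_of_forall_act_eq_constTup (hA i (τ k))) hU₁ hU₂ hUT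
end
end

section
/- Every topological space X having property (σ) (with respect to some sequence (K_n)) is a paracompact Hausdorff space. -/
/-- A (possibly non-Hausdorff) topological space `X` has *property (σ)* with respect to a
sequence `K` of subsets if (σ1) the `K n` increase and cover `X`; (σ2) each `K n` with the
subspace topology is a compact Hausdorff space; (σ3) a set `A ⊆ X` is closed iff `A ∩ K n`
is closed in the subspace `K n` for every `n`. -/
def PropertySigmaWith (X : Type*) [TopologicalSpace X] (K : ℕ → Set X) : Prop :=
  (∀ n, K n ⊆ K (n + 1)) ∧ (⋃ n, K n) = Set.univ ∧
    (∀ n, CompactSpace (K n) ∧ T2Space (K n)) ∧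
    (∀ A : Set X, IsClosed A ↔ ∀ n, IsClosed ((↑) ⁻¹' A : Set (K n)))

/-!
Every `K n` is closed in `X` (it is compact in each Hausdorff `K m`, `m ≥ n`), so `X` is `T₁`
and σ-compact, hence Lindelöf. For normality, given disjoint closed `A` and `B`, separate
`A ∩ K n` and `B ∩ K n` inside the compact Hausdorff space `K n` by relatively open sets with
disjoint closures, choosing those of stage `n + 1` to contain the closures of those of stage `n`;
the two increasing unions are then open by (σ3) and disjoint. A regular Lindelöf space is
paracompact (Michael): if a countable open cover `V n` has `closure (V n) ⊆ S n` with `S n` open,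
then `S n \ ⋃ i < n, closure (V i)` is a locally finite open refinement of `S`.
-/

open Set Topology

theorem Nat.exists_seq_of_exists_succ {α : Type*} {P : ℕ → α → Prop} {R : α → α → Prop}
    (h₀ : ∃ a, P 0 a) (hsucc : ∀ n a, P n a → ∃ b, P (n + 1) b ∧ R a b) :
    ∃ f : ℕ → α, ∀ n, P n (f n) ∧ R (f n) (f (n + 1)) := by
  choose a₀ ha₀ using h₀
  choose next hnext hR using hsucc
  let g : (n : ℕ) → {a // P n a} := fun n =>
    Nat.rec ⟨a₀, ha₀⟩ (fun n a => ⟨next n a a.2, hnext n a a.2⟩) n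
  exact ⟨fun n => (g n).1, fun n => ⟨(g n).2, hR n _ (g n).2⟩⟩

section

variable {X : Type*} [TopologicalSpace X]

theorem exists_locallyFinite_refinement_of_closure_subset {V S : ℕ → Set X}
    (hVo : ∀ n, IsOpen (V n)) (hSo : ∀ n, IsOpen (S n)) (hV : ⋃ n, V n = univ)
    (hVS : ∀ n, closure (V n) ⊆ S n) :
    ∃ W : ℕ → Set X, (∀ n, IsOpen (W n)) ∧ ⋃ n, W n = univ ∧ LocallyFinite W ∧
      ∀ n, W n ⊆ S n := by
  classical
  refine ⟨fun n => S n \ ⋃ i ∈ Iio n, closure (V i), fun n => ?_, ?_, ?_, fun n => sdiff_subset⟩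
  · exact (hSo n).sdiff ((finite_Iio n).isClosed_biUnion fun i _ => isClosed_closure)
  · refine eq_univ_of_forall fun y => mem_iUnion.2 ?_
    have hy : ∃ n, y ∈ closure (V n) :=
      (mem_iUnion.1 (hV ▸ mem_univ y)).imp fun n hn => subset_closure hn
    refine ⟨Nat.find hy, hVS _ (Nat.find_spec hy), ?_⟩
    simp only [mem_iUnion, mem_Iio, not_exists]
    exact fun i hi => Nat.find_min hy hi
  · intro y
    obtain ⟨m, hm⟩ := mem_iUnion.1 (hV ▸ mem_univ y)
    refine ⟨V m, (hVo m).mem_nhds hm, (finite_Iic m).subset ?_⟩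
    rintro i ⟨z, hzW, hzV⟩
    by_contra hi
    exact hzW.2 (mem_biUnion (mem_Iio.2 (not_le.1 hi)) (subset_closure hzV))

theorem paracompactSpace_of_regularSpace_lindelofSpace [RegularSpace X] [LindelofSpace X] :
    ParacompactSpace X := by
  rcases isEmpty_or_nonempty X with hX | ⟨⟨x₀⟩⟩
  · infer_instance
  refine ParacompactSpace.of_hasBasis nhds_basis_opens fun U hU => ?_
  have hV : ∀ x, ∃ V, (x ∈ V ∧ IsOpen V) ∧ closure V ⊆ U x := fun x =>
    (hasBasis_opens_closure x).mem_iff.1 ((hU x).2.mem_nhds (hU x).1)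
  choose V hV hVU using hV
  obtain ⟨t, htc, htV⟩ :=
    LindelofSpace.elim_nhds_subcover V fun x => (hV x).2.mem_nhds (hV x).1
  have ht : t.Nonempty := by
    obtain ⟨x, hx, -⟩ := mem_iUnion₂.1 (htV ▸ mem_univ x₀)
    exact ⟨x, hx⟩
  obtain ⟨x, rfl⟩ := htc.exists_eq_range ht
  rw [biUnion_range] at htV
  obtain ⟨W, hWo, hW, hWlf, hWU⟩ := exists_locallyFinite_refinement_of_closure_subset
    (fun n => (hV (x n)).2) (fun n => (hU (x n)).2) htV fun n => hVU (x n)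
  exact ⟨ℕ, W, hWo, hW, hWlf, fun n => ⟨x n, hWU n⟩⟩

structure IsSeparatingPair (K A B U V : Set X) : Prop where
  subset_left : U ⊆ K
  subset_right : V ⊆ K
  isOpen_left : IsOpen ((↑) ⁻¹' U : Set K)
  isOpen_right : IsOpen ((↑) ⁻¹' V : Set K)
  inter_subset_left : A ∩ K ⊆ U
  inter_subset_right : B ∩ K ⊆ V
  disjoint_closure : Disjoint (closure U) (closure V)

variable {K A B C D U V : Set X}

theorem exists_isSeparatingPair (hK : IsClosed K) [NormalSpace K] (hA : IsClosed A)
    (hB : IsClosed B) (hC : IsClosed C) (hD : IsClosed D) (hCK : C ⊆ K) (hDK : D ⊆ K)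
    (hdisj : Disjoint (A ∪ C) (B ∪ D)) :
    ∃ U V, IsSeparatingPair K A B U V ∧ C ⊆ U ∧ D ⊆ V := by
  have hs : IsClosed ((↑) ⁻¹' (A ∪ C) : Set K) := (hA.union hC).preimage continuous_subtype_val
  have ht : IsClosed ((↑) ⁻¹' (B ∪ D) : Set K) := (hB.union hD).preimage continuous_subtype_val
  obtain ⟨U, hUo, hsU, hUc⟩ := normal_exists_closure_subset hs ht.isOpen_compl
    (hdisj.preimage _).subset_compl_right
  obtain ⟨V, hVo, htV, hVc⟩ := normal_exists_closure_subset ht isClosed_closure.isOpen_compl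
    (disjoint_compl_left.mono_left hUc).subset_compl_left
  have hemb := hK.isClosedEmbedding_subtypeVal
  have hcover : ∀ {E F : Set X} {W : Set K}, E ⊆ K → (↑) ⁻¹' (F ∪ E) ⊆ W → F ∩ K ∪ E ⊆ (↑) '' W :=
    fun hE hW x hx => by
      have hxK : x ∈ K := hx.elim (·.2) (hE ·)
      exact ⟨⟨x, hxK⟩, hW (hx.imp (·.1) id), rfl⟩
  refine ⟨(↑) '' U, (↑) '' V, ⟨Subtype.coe_image_subset _ _, Subtype.coe_image_subset _ _,
    by rwa [preimage_image_eq _ Subtype.val_injective],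
    by rwa [preimage_image_eq _ Subtype.val_injective],
    subset_union_left.trans (hcover hCK hsU), subset_union_left.trans (hcover hDK htV), ?_⟩,
    subset_union_right.trans (hcover hCK hsU), subset_union_right.trans (hcover hDK htV)⟩
  rw [hemb.closure_image_eq, hemb.closure_image_eq]
  exact (disjoint_image_iff Subtype.val_injective).2
    (disjoint_compl_right.mono_right hVc)

theorem IsSeparatingPair.disjoint_union_closure (h : IsSeparatingPair K A B U V) (hK : IsClosed K)
    (hAB : Disjoint A B) : Disjoint (A ∪ closure U) (B ∪ closure V) := by
  have hU : closure U ⊆ K := closure_minimal h.subset_left hK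
  have hV : closure V ⊆ K := closure_minimal h.subset_right hK
  refine disjoint_union_left.2 ⟨disjoint_union_right.2 ⟨hAB, ?_⟩,
    disjoint_union_right.2 ⟨?_, h.disjoint_closure⟩⟩
  · refine disjoint_left.2 fun x hxA hxV => disjoint_left.1 h.disjoint_closure ?_ hxV
    exact subset_closure (h.inter_subset_left ⟨hxA, hV hxV⟩)
  · refine disjoint_left.2 fun x hxU hxB => disjoint_left.1 h.disjoint_closure hxU ?_
    exact subset_closure (h.inter_subset_right ⟨hxB, hU hxU⟩)

end

namespace PropertySigmaWith

variable {X : Type*} [TopologicalSpace X] {K : ℕ → Set X}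

theorem monotone (hK : PropertySigmaWith X K) : Monotone K :=
  monotone_nat_of_le_succ hK.1

theorem compactSpace (hK : PropertySigmaWith X K) (n : ℕ) : CompactSpace (K n) :=
  (hK.2.2.1 n).1

theorem t2Space (hK : PropertySigmaWith X K) (n : ℕ) : T2Space (K n) :=
  (hK.2.2.1 n).2

theorem isCompact (hK : PropertySigmaWith X K) (n : ℕ) : IsCompact (K n) :=
  isCompact_iff_compactSpace.2 (hK.compactSpace n)

theorem isClosed_iff (hK : PropertySigmaWith X K) {A : Set X} :
    IsClosed A ↔ ∀ n, IsClosed ((↑) ⁻¹' A : Set (K n)) :=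
  hK.2.2.2 A

theorem isOpen_iff (hK : PropertySigmaWith X K) {U : Set X} :
    IsOpen U ↔ ∀ n, IsOpen ((↑) ⁻¹' U : Set (K n)) := by
  simp only [← isClosed_compl_iff, hK.isClosed_iff, preimage_compl]

theorem isClosed (hK : PropertySigmaWith X K) (n : ℕ) : IsClosed (K n) := by
  refine hK.isClosed_iff.2 fun m => ?_
  rcases le_total n m with hnm | hmn
  · have := hK.t2Space m
    have := hK.compactSpace n
    have := (isCompact_range (continuous_inclusion (hK.monotone hnm))).isClosed
    rwa [range_inclusion] at this
  · rw [preimage_eq_univ_iff.2 (by simpa using hK.monotone hmn)]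
    exact isClosed_univ

theorem t1Space (hK : PropertySigmaWith X K) : T1Space X :=
  ⟨fun x => hK.isClosed_iff.2 fun n => by
    have := hK.t2Space n
    exact (Subsingleton.finite fun a ha b hb => Subtype.ext (ha.trans hb.symm)).isClosed⟩

theorem sigmaCompactSpace (hK : PropertySigmaWith X K) : SigmaCompactSpace X :=
  ⟨⟨K, hK.isCompact, hK.2.1⟩⟩

theorem isOpen_iUnion (hK : PropertySigmaWith X K) {S : ℕ → Set X} (hS : Monotone S)
    (hSo : ∀ n, IsOpen ((↑) ⁻¹' S n : Set (K n))) : IsOpen (⋃ n, S n) := by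
  refine hK.isOpen_iff.2 fun m => ?_
  rw [← hS.iUnion_nat_add m, preimage_iUnion]
  exact _root_.isOpen_iUnion fun n =>
    (hSo (n + m)).preimage (continuous_inclusion (hK.monotone (Nat.le_add_left m n)))

theorem exists_isSeparatingPair_succ (hK : PropertySigmaWith X K) {A B U V : Set X}
    (hA : IsClosed A) (hB : IsClosed B) (hAB : Disjoint A B) {n : ℕ}
    (h : IsSeparatingPair (K n) A B U V) :
    ∃ U' V', IsSeparatingPair (K (n + 1)) A B U' V' ∧ U ⊆ U' ∧ V ⊆ V' := by
  have := hK.compactSpace (n + 1)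
  have := hK.t2Space (n + 1)
  have hUK := closure_minimal h.subset_left (hK.isClosed n)
  have hVK := closure_minimal h.subset_right (hK.isClosed n)
  obtain ⟨U', V', h', hUU', hVV'⟩ := exists_isSeparatingPair (hK.isClosed (n + 1)) hA hB
    isClosed_closure isClosed_closure (hUK.trans (hK.1 n)) (hVK.trans (hK.1 n))
    (h.disjoint_union_closure (hK.isClosed n) hAB)
  exact ⟨U', V', h', subset_closure.trans hUU', subset_closure.trans hVV'⟩

theorem normalSpace (hK : PropertySigmaWith X K) : NormalSpace X := by
  refine ⟨fun A B hA hB hAB => ?_⟩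
  have h₀ : ∃ p : Set X × Set X, IsSeparatingPair (K 0) A B p.1 p.2 := by
    have := hK.compactSpace 0
    have := hK.t2Space 0
    obtain ⟨U, V, h, -⟩ := exists_isSeparatingPair (hK.isClosed 0) hA hB isClosed_empty
      isClosed_empty (empty_subset _) (empty_subset _) (by simpa using hAB)
    exact ⟨(U, V), h⟩
  obtain ⟨p, hp⟩ := Nat.exists_seq_of_exists_succ
    (α := Set X × Set X) (P := fun n p => IsSeparatingPair (K n) A B p.1 p.2)
    (R := fun p q => p.1 ⊆ q.1 ∧ p.2 ⊆ q.2) h₀ fun n p h => by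
      obtain ⟨U, V, hUV⟩ := hK.exists_isSeparatingPair_succ hA hB hAB h
      exact ⟨(U, V), hUV⟩
  have hmono₁ : Monotone fun n => (p n).1 := monotone_nat_of_le_succ fun n => (hp n).2.1
  have hmono₂ : Monotone fun n => (p n).2 := monotone_nat_of_le_succ fun n => (hp n).2.2
  have hmem : ∀ x, ∃ n, x ∈ K n := fun x => mem_iUnion.1 (hK.2.1 ▸ mem_univ x)
  refine ⟨⋃ n, (p n).1, ⋃ n, (p n).2, hK.isOpen_iUnion hmono₁ fun n => (hp n).1.isOpen_left,
    hK.isOpen_iUnion hmono₂ fun n => (hp n).1.isOpen_right,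
    fun x hx => ?_, fun x hx => ?_, ?_⟩
  · obtain ⟨n, hn⟩ := hmem x
    exact mem_iUnion.2 ⟨n, (hp n).1.inter_subset_left ⟨hx, hn⟩⟩
  · obtain ⟨n, hn⟩ := hmem x
    exact mem_iUnion.2 ⟨n, (hp n).1.inter_subset_right ⟨hx, hn⟩⟩
  · refine disjoint_iUnion_left.2 fun m => disjoint_iUnion_right.2 fun n => ?_
    exact (hp (max m n)).1.disjoint_closure.mono
      ((hmono₁ (le_max_left m n)).trans subset_closure)
      ((hmono₂ (le_max_right m n)).trans subset_closure)

end PropertySigmaWith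

/-- Every topological space having property (σ) with respect to some
sequence is a paracompact Hausdorff space. -/
theorem stmt_11 {X : Type*} [TopologicalSpace X]
    (h : ∃ K : ℕ → Set X, PropertySigmaWith X K) :
    ParacompactSpace X ∧ T2Space X := by
  obtain ⟨K, hK⟩ := h
  have := hK.t1Space
  have := hK.normalSpace
  have := hK.sigmaCompactSpace
  exact ⟨paracompactSpace_of_regularSpace_lindelofSpace, inferInstance⟩
end

section
/- If a topological space X has property (σ) with respect to (K_n) and a topological space Y has property (σ) with respect to (L_n), then the product space X × Y (with the product topology) has property (σ) with respect to (K_n × L_n). In particular, a set A ⊆ X × Y is closed if and only if A ∩ (K_n × L_n) is closed in the subspace K_n × L_n for every n. -/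
/-
Only (σ3) for the product needs work. Given `z ∉ A`, grow compact boxes
`C k ×ˢ D k ⊆ K (m + k) ×ˢ L (m + k)` missing `A`, starting from `{z.1} ×ˢ {z.2}`, each factor
a relative neighbourhood of the previous one: the tube lemma gives an open box around
`C k ×ˢ D k` missing the closed set that cuts out `A` on the next level, and local compactness
of the next levels gives compact neighbourhoods inside it. By (σ3) the unions `⋃ C k` and
`⋃ D k` are open, and their product is a neighbourhood of `z` missing `A`.
-/

open Set Filter Topology

section

variable {X Y : Type*} [TopologicalSpace X] [TopologicalSpace Y] {K : ℕ → Set X}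
  {L : ℕ → Set Y}

theorem exists_isCompact_subset_inter_mem_nhdsWithin {S : Set X} [LocallyCompactSpace S]
    {C u : Set X} (hC : IsCompact C) (hCS : C ⊆ S) (hu : IsOpen u) (hCu : C ⊆ u) :
    ∃ C', IsCompact C' ∧ C' ⊆ S ∩ u ∧ ∀ x ∈ C, C' ∈ 𝓝[S] x := by
  have hc : IsCompact ((↑) ⁻¹' C : Set S) := by
    rwa [Subtype.isCompact_iff, Subtype.image_preimage_coe, inter_eq_self_of_subset_right hCS]
  obtain ⟨c', hc', hcc', hc'u⟩ :=
    exists_compact_between hc (hu.preimage continuous_subtype_val) (preimage_mono hCu)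
  refine ⟨(↑) '' c', hc'.image continuous_subtype_val, ?_, fun x hx => ?_⟩
  · rintro _ ⟨y, hy, rfl⟩
    exact ⟨y.2, hc'u hy⟩
  · have : c' ∈ 𝓝 (⟨x, hCS hx⟩ : S) := mem_interior_iff_mem_nhds.1 (hcc' hx)
    exact mem_nhds_subtype_iff_nhdsWithin.1 this

theorem exists_isCompact_prod_disjoint_mem_nhdsWithin {S : Set X} {T : Set Y}
    [LocallyCompactSpace S] [LocallyCompactSpace T] {A : Set (X × Y)}
    (hA : IsClosed ((↑) ⁻¹' A : Set (S ×ˢ T))) {C : Set X} {D : Set Y}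
    (hC : IsCompact C) (hD : IsCompact D) (hCS : C ⊆ S) (hDT : D ⊆ T)
    (hCD : Disjoint (C ×ˢ D) A) :
    ∃ C' D', IsCompact C' ∧ IsCompact D' ∧ C' ⊆ S ∧ D' ⊆ T ∧ Disjoint (C' ×ˢ D') A ∧
      (∀ x ∈ C, C' ∈ 𝓝[S] x) ∧ ∀ y ∈ D, D' ∈ 𝓝[T] y := by
  obtain ⟨F, hF, hFA⟩ := isClosed_induced_iff.1 hA
  have hAF : S ×ˢ T ∩ F = S ×ˢ T ∩ A := by
    simpa only [Subtype.image_preimage_coe] using congrArg (Subtype.val '' ·) hFA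
  have hCDF : C ×ˢ D ⊆ Fᶜ := fun z hz hzF =>
    hCD.notMem_of_mem_left hz (hAF.subset ⟨prod_mono hCS hDT hz, hzF⟩).2
  obtain ⟨u, v, hu, hv, hCu, hDv, huv⟩ := generalized_tube_lemma hC hD hF.isOpen_compl hCDF
  obtain ⟨C', hC', hC'Su, hCC'⟩ := exists_isCompact_subset_inter_mem_nhdsWithin hC hCS hu hCu
  obtain ⟨D', hD', hD'Tv, hDD'⟩ := exists_isCompact_subset_inter_mem_nhdsWithin hD hDT hv hDv
  refine ⟨C', D', hC', hD', fun x hx => (hC'Su hx).1, fun y hy => (hD'Tv hy).1,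
    disjoint_left.2 fun z hz hzA => ?_, hCC', hDD'⟩
  have hzST : z ∈ S ×ˢ T := ⟨(hC'Su hz.1).1, (hD'Tv hz.2).1⟩
  exact huv ⟨(hC'Su hz.1).2, (hD'Tv hz.2).2⟩ (hAF.symm.subset ⟨hzST, hzA⟩).2

theorem PropertySigmaWith.monotone_s12 (hK : PropertySigmaWith X K) : Monotone K :=
  monotone_nat_of_le_succ hK.1

theorem PropertySigmaWith.exists_mem (hK : PropertySigmaWith X K) (x : X) : ∃ n, x ∈ K n :=
  mem_iUnion.1 (hK.2.1 ▸ mem_univ x)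

theorem PropertySigmaWith.isOpen_iff_s12 (hK : PropertySigmaWith X K) {U : Set X} :
    IsOpen U ↔ ∀ n, IsOpen ((↑) ⁻¹' U : Set (K n)) := by
  simp only [← isClosed_compl_iff, hK.2.2.2, preimage_compl]

def IsNhdsChain (K : ℕ → Set X) (m : ℕ) (C : ℕ → Set X) : Prop :=
  ∀ k, C k ⊆ K (m + k) ∧ ∀ x ∈ C k, C (k + 1) ∈ 𝓝[K (m + k + 1)] x

theorem IsNhdsChain.monotone_s12 {m : ℕ} {C : ℕ → Set X} (hC : IsNhdsChain K m C)
    (hK : ∀ n, K n ⊆ K (n + 1)) : Monotone C :=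
  monotone_nat_of_le_succ fun k x hx =>
    mem_of_mem_nhdsWithin (hK _ ((hC k).1 hx)) ((hC k).2 x hx)

theorem PropertySigmaWith.isOpen_iUnion_of_isNhdsChain (hK : PropertySigmaWith X K) {m : ℕ}
    {C : ℕ → Set X} (hC : IsNhdsChain K m C) : IsOpen (⋃ k, C k) := by
  refine hK.isOpen_iff_s12.2 fun n => isOpen_iff_mem_nhds.2 fun x hx => ?_
  obtain ⟨j, hj⟩ := mem_iUnion.1 hx
  have hx' : (x : X) ∈ C (max j n) := hC.monotone_s12 hK.1 (le_max_left j n) hj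
  have hnbhd : C (max j n + 1) ∈ 𝓝[K n] (x : X) :=
    nhdsWithin_mono _ (hK.monotone_s12 (by omega)) ((hC _).2 x hx')
  rw [mem_nhds_subtype_iff_nhdsWithin, Subtype.image_preimage_coe]
  exact inter_mem self_mem_nhdsWithin (mem_of_superset hnbhd (subset_iUnion C _))

theorem PropertySigmaWith.exists_isNhdsChain_prod_disjoint (hK : PropertySigmaWith X K)
    (hL : PropertySigmaWith Y L) {A : Set (X × Y)}
    (hA : ∀ n, IsClosed ((↑) ⁻¹' A : Set (K n ×ˢ L n))) {z : X × Y} (hz : z ∉ A) :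
    ∃ m C D, IsNhdsChain K m C ∧ IsNhdsChain L m D ∧ z.1 ∈ C 0 ∧ z.2 ∈ D 0 ∧
      ∀ k, Disjoint (C k ×ˢ D k) A := by
  obtain ⟨a, ha⟩ := hK.exists_mem z.1
  obtain ⟨b, hb⟩ := hL.exists_mem z.2
  set m := max a b
  let P : ℕ → Set X × Set Y → Prop := fun k p => IsCompact p.1 ∧ IsCompact p.2 ∧
    p.1 ⊆ K (m + k) ∧ p.2 ⊆ L (m + k) ∧ Disjoint (p.1 ×ˢ p.2) A
  have step : ∀ k p, P k p → ∃ q, P (k + 1) q ∧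
      (∀ x ∈ p.1, q.1 ∈ 𝓝[K (m + k + 1)] x) ∧ ∀ y ∈ p.2, q.2 ∈ 𝓝[L (m + k + 1)] y := by
    rintro k ⟨C, D⟩ ⟨hC, hD, hCK, hDL, hCD⟩
    have := (hK.2.2.1 (m + k + 1)).1; have := (hK.2.2.1 (m + k + 1)).2
    have := (hL.2.2.1 (m + k + 1)).1; have := (hL.2.2.1 (m + k + 1)).2
    obtain ⟨C', D', hC', hD', hC'K, hD'L, hC'D', hCC', hDD'⟩ :=
      exists_isCompact_prod_disjoint_mem_nhdsWithin (hA (m + k + 1)) hC hD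
        (hCK.trans (hK.1 _)) (hDL.trans (hL.1 _)) hCD
    exact ⟨(C', D'), ⟨hC', hD', hC'K, hD'L, hC'D'⟩, hCC', hDD'⟩
  choose! next hnextP hnextC hnextD using step
  let s : ℕ → Set X × Set Y := fun k => Nat.rec ({z.1}, {z.2}) next k
  have hs : ∀ k, P k (s k) := by
    intro k
    induction k with
    | zero =>
      refine ⟨isCompact_singleton, isCompact_singleton,
        singleton_subset_iff.2 (hK.monotone_s12 (le_max_left a b) ha),
        singleton_subset_iff.2 (hL.monotone_s12 (le_max_right a b) hb), ?_⟩
      show Disjoint ({z.1} ×ˢ {z.2}) A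
      rwa [singleton_prod_singleton, disjoint_singleton_left]
    | succ k ih => exact hnextP k (s k) ih
  exact ⟨m, fun k => (s k).1, fun k => (s k).2,
    fun k => ⟨(hs k).2.2.1, hnextC k (s k) (hs k)⟩,
    fun k => ⟨(hs k).2.2.2.1, hnextD k (s k) (hs k)⟩, rfl, rfl, fun k => (hs k).2.2.2.2⟩

theorem PropertySigmaWith.isClosed_of_isClosed_preimage_prod (hK : PropertySigmaWith X K)
    (hL : PropertySigmaWith Y L) {A : Set (X × Y)}
    (hA : ∀ n, IsClosed ((↑) ⁻¹' A : Set (K n ×ˢ L n))) : IsClosed A := by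
  refine isOpen_compl_iff.1 (isOpen_iff_mem_nhds.2 fun z hz => ?_)
  obtain ⟨m, C, D, hC, hD, hzC, hzD, hCD⟩ := hK.exists_isNhdsChain_prod_disjoint hL hA hz
  have hCo : IsOpen (⋃ k, C k) := hK.isOpen_iUnion_of_isNhdsChain hC
  have hDo : IsOpen (⋃ k, D k) := hL.isOpen_iUnion_of_isNhdsChain hD
  refine mem_of_superset ((hCo.prod hDo).mem_nhds ⟨mem_iUnion_of_mem 0 hzC,
    mem_iUnion_of_mem 0 hzD⟩) ?_
  rintro w ⟨hw₁, hw₂⟩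
  obtain ⟨i, hi⟩ := mem_iUnion.1 hw₁
  obtain ⟨j, hj⟩ := mem_iUnion.1 hw₂
  exact (hCD (max i j)).notMem_of_mem_left
    ⟨hC.monotone_s12 hK.1 (le_max_left i j) hi, hD.monotone_s12 hL.1 (le_max_right i j) hj⟩

theorem PropertySigmaWith.prod (hK : PropertySigmaWith X K) (hL : PropertySigmaWith Y L) :
    PropertySigmaWith (X × Y) (fun n => K n ×ˢ L n) := by
  refine ⟨fun n => prod_mono (hK.1 n) (hL.1 n), ?_, fun n => ?_, fun A => ?_⟩
  · refine eq_univ_of_forall fun z => ?_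
    obtain ⟨a, ha⟩ := hK.exists_mem z.1
    obtain ⟨b, hb⟩ := hL.exists_mem z.2
    exact mem_iUnion.2 ⟨max a b, hK.monotone_s12 (le_max_left a b) ha,
      hL.monotone_s12 (le_max_right a b) hb⟩
  · obtain ⟨hKc, _⟩ := hK.2.2.1 n
    obtain ⟨hLc, _⟩ := hL.2.2.1 n
    exact ⟨isCompact_iff_compactSpace.1
        ((isCompact_iff_compactSpace.2 hKc).prod (isCompact_iff_compactSpace.2 hLc)),
      (Homeomorph.Set.prod (K n) (L n)).isEmbedding.t2Space⟩
  · exact ⟨fun hA n => hA.preimage continuous_subtype_val,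
      hK.isClosed_of_isClosed_preimage_prod hL⟩

end

/-- If `X` has property (σ) w.r.t. `K` and `Y` has property (σ) w.r.t.
`L`, then `X × Y` has property (σ) w.r.t. `fun n => K n ×ˢ L n`; in particular a set
`A ⊆ X × Y` is closed iff `A ∩ (K n ×ˢ L n)` is closed in the subspace `K n ×ˢ L n` for
every `n`. -/
theorem stmt_12 {X Y : Type*} [TopologicalSpace X] [TopologicalSpace Y]
    (K : ℕ → Set X) (L : ℕ → Set Y)
    (hK : PropertySigmaWith X K) (hL : PropertySigmaWith Y L) :
    PropertySigmaWith (X × Y) (fun n => K n ×ˢ L n) ∧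
      ∀ A : Set (X × Y), IsClosed A ↔ ∀ n, IsClosed ((↑) ⁻¹' A : Set (K n ×ˢ L n)) :=
  ⟨hK.prod hL, (hK.prod hL).2.2.2⟩
end
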